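/- arXiv:1506.04664 — 9 statements merged into one kernel-verified Lean document; each statement's English description precedes it below -/
import Mathlib

section
/- Let μ* : 𝒫(ℕ⁺) → ℝ satisfy: μ*(ℕ⁺) = 1; μ*(X ∪ Y) ≤ μ*(X) + μ*(Y) for all X, Y; and μ*(k·X + h) = (1/k)·μ*(X) for all X ⊆ ℕ⁺ and all positive integers h, k, where k·X + h := {kx + h : x ∈ X}. Then μ*(X) = 0 for every finite X ⊆ ℕ⁺. -/
/-!
Scaling by `k = 2` forces `μ ∅ = 0`, and `k = 1` makes `μ` translation invariant. Hence
`μ {3} = μ {1}`, while `3 = 2 * 1 + 1` gives `μ {3} = μ {1} / 2`; so every singleton, and by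
subadditivity every finite set, has `μ ≤ 0`. Conversely `μ univ = μ (X ∪ univ) ≤ μ X + μ univ`,
so `μ` is nonnegative.
-/

open Set

theorem nonneg_of_subadditive {α : Type*} {μ : Set α → ℝ}
    (hsub : ∀ X Y : Set α, μ (X ∪ Y) ≤ μ X + μ Y) (X : Set α) : 0 ≤ μ X := by
  have h := hsub X univ
  rw [union_univ] at h
  linarith

def ScalesUnderAffineMaps (μ : Set ℕ+ → ℝ) : Prop :=
  ∀ (X : Set ℕ+) (h k : ℕ+), μ ((fun x => k * x + h) '' X) = ((k : ℕ) : ℝ)⁻¹ * μ X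

namespace ScalesUnderAffineMaps

variable {μ : Set ℕ+ → ℝ}

theorem map_add_right (hμ : ScalesUnderAffineMaps μ) (X : Set ℕ+) (h : ℕ+) :
    μ ((· + h) '' X) = μ X := by
  simpa using hμ X h 1

theorem empty (hμ : ScalesUnderAffineMaps μ) : μ ∅ = 0 := by
  have h := hμ ∅ 1 2
  rw [image_empty, PNat.val_ofNat] at h
  norm_num at h
  linarith

theorem singleton (hμ : ScalesUnderAffineMaps μ) (n : ℕ+) : μ {n} = 0 := by
  induction n using PNat.recOn with
  | one =>
    have h_half : μ {2 * 1 + 1} = 2⁻¹ * μ {1} := by simpa using hμ {1} 1 2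
    have h_shift : μ {1 + 2} = μ {1} := by simpa using hμ.map_add_right {1} 2
    rw [show (2 * 1 + 1 : ℕ+) = 1 + 2 from rfl, h_shift] at h_half
    linarith
  | succ n ih => simpa [ih] using hμ.map_add_right {n} 1

theorem nonpos_of_finite (hμ : ScalesUnderAffineMaps μ)
    (hsub : ∀ X Y : Set ℕ+, μ (X ∪ Y) ≤ μ X + μ Y) {Y : Set ℕ+} (hY : Y.Finite) : μ Y ≤ 0 := by
  induction Y, hY using Set.Finite.induction_on with
  | empty => exact hμ.empty.le
  | @insert a s _ _ ih =>
    rw [insert_eq]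
    linarith [hsub {a} s, hμ.singleton a]

end ScalesUnderAffineMaps

theorem stmt3_general (μ : Set ℕ+ → ℝ)
    (hsub : ∀ X Y : Set ℕ+, μ (X ∪ Y) ≤ μ X + μ Y)
    (hhom : ∀ (X : Set ℕ+) (h k : ℕ+),
      μ ((fun x => k * x + h) '' X) = ((k : ℕ) : ℝ)⁻¹ * μ X)
    (X : Set ℕ+) (hX : X.Finite) : μ X = 0 :=
  le_antisymm (ScalesUnderAffineMaps.nonpos_of_finite hhom hsub hX) (nonneg_of_subadditive hsub X)

theorem stmt3 (μ : Set ℕ+ → ℝ)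
    (huniv : μ Set.univ = 1)
    (hsub : ∀ X Y : Set ℕ+, μ (X ∪ Y) ≤ μ X + μ Y)
    (hhom : ∀ (X : Set ℕ+) (h k : ℕ+),
      μ ((fun x => k * x + h) '' X) = ((k : ℕ) : ℝ)⁻¹ * μ X)
    (X : Set ℕ+) (hX : X.Finite) : μ X = 0 :=
  stmt3_general μ hsub hhom X hX
end

section
/- Let μ* : 𝒫(ℕ⁺) → ℝ satisfy μ*(ℕ⁺) = 1, subadditivity, and μ*(k·X + h) = (1/k)·μ*(X) for all X ⊆ ℕ⁺ and h, k ∈ ℕ⁺. Fix k ∈ ℕ⁺ and h₁, …, hₙ ∈ ℕ pairwise incongruent modulo k, and let X := ⋃ᵢ (k·ℕ⁺ + hᵢ) (intersected with ℕ⁺). Then μ*(X) = n/k. -/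
/-!
Homogeneity under `x ↦ kx + h` forces `μ ∅ = 0` and, since all singletons have the same value
while `{2·1 + 1}` has half of it, `μ {x} = 0`; so finite sets have `μ ≤ 0`. A residue class
`k·ℕ⁺ + r` is, up to one point, an affine image of `ℕ⁺`, hence has `μ ≤ 1/k`. Subadditivity then
gives `μ X ≤ n/k`. Conversely, up to a finite set, `ℕ⁺` is covered by `X` and the `k - n` classes
of the residues not taken by the `hᵢ`, so `1 ≤ μ X + (k - n)/k`.
-/

open scoped Finset

namespace PNatDensity

def UnionSubadditive (μ : Set ℕ+ → ℝ) : Prop :=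
  ∀ X Y : Set ℕ+, μ (X ∪ Y) ≤ μ X + μ Y

def AffineHomogeneous (μ : Set ℕ+ → ℝ) : Prop :=
  ∀ (X : Set ℕ+) (h k : ℕ+), μ ((fun x => k * x + h) '' X) = ((k : ℕ) : ℝ)⁻¹ * μ X

def residueClass (k : ℕ+) (r : ℕ) : Set ℕ+ :=
  {x | ∃ m : ℕ+, (x : ℕ) = (k : ℕ) * (m : ℕ) + r}

section residueClass

variable {k : ℕ+}

theorem mem_residueClass_iff {r : ℕ} {x : ℕ+} :
    x ∈ residueClass k r ↔ (x : ℕ) ≡ r [MOD k] ∧ r < x := by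
  constructor
  · rintro ⟨m, hm⟩
    refine ⟨?_, ?_⟩
    · rw [hm, Nat.ModEq, Nat.mul_add_mod]
    · nlinarith [k.pos, m.pos]
  · rintro ⟨hmod, hlt⟩
    obtain ⟨c, hc⟩ := (Nat.modEq_iff_dvd' hlt.le).mp hmod.symm
    have hc0 : 0 < c := Nat.pos_of_ne_zero (by rintro rfl; omega)
    exact ⟨⟨c, hc0⟩, by simp only [PNat.mk_coe]; omega⟩

theorem residueClass_eq_range (p : ℕ+) :
    residueClass k p = Set.range fun x => k * x + p := by
  ext x
  simp only [residueClass, Set.mem_ofPred_eq, Set.mem_range, ← PNat.coe_inj, PNat.add_coe,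
    PNat.mul_coe, eq_comm]

theorem residueClass_eq_insert (r : ℕ) (p : ℕ+) (hp : (p : ℕ) = k + r) :
    residueClass k r = insert p (residueClass k p) := by
  ext x
  simp only [residueClass, Set.mem_insert_iff, Set.mem_ofPred_eq, ← PNat.coe_inj, hp]
  constructor
  · rintro ⟨m, hm⟩
    by_cases hm1 : m = 1
    · left; simpa [hm1] using hm
    · obtain ⟨m', rfl⟩ := PNat.exists_eq_succ_of_ne_one hm1
      right; exact ⟨m', by rw [hm, PNat.add_coe, PNat.one_coe]; ring⟩
  · rintro (hx | ⟨m, hm⟩)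
    · exact ⟨1, by simpa using hx⟩
    · exact ⟨m + 1, by rw [hm, PNat.add_coe, PNat.one_coe]; ring⟩

theorem exists_finite_univ_subset_residueClass_cover {ι : Type*} [Fintype ι] (h : ι → ℕ) :
    ∃ G : Set ℕ+, G.Finite ∧ Set.univ ⊆ (⋃ i, residueClass k (h i)) ∪
      (⋃ r ∈ Finset.range k \ Finset.univ.image (fun i => h i % k), residueClass k r) ∪ G := by
  refine ⟨{x | (x : ℕ) ≤ k + Finset.univ.sup h},
    (Set.finite_Iic _).preimage PNat.coe_injective.injOn, fun x _ => ?_⟩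
  by_cases hx : (x : ℕ) ≤ k + Finset.univ.sup h
  · exact Or.inr hx
  have hx : k + Finset.univ.sup h < (x : ℕ) := not_le.mp hx
  by_cases hres : ∃ i, h i % k = x % k
  · obtain ⟨i, hi⟩ := hres
    have hle : h i ≤ Finset.univ.sup h := Finset.le_sup (Finset.mem_univ i)
    exact Or.inl (Or.inl (Set.mem_iUnion.mpr ⟨i, mem_residueClass_iff.mpr ⟨hi.symm, by omega⟩⟩))
  · have hlt : (x : ℕ) % k < k := Nat.mod_lt _ k.pos
    refine Or.inl (Or.inr (Set.mem_biUnion (x := (x : ℕ) % k) ?_ ?_))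
    · simpa [hlt] using hres
    · exact mem_residueClass_iff.mpr ⟨(Nat.mod_modEq _ _).symm, by omega⟩

theorem card_range_sdiff_image_mod_add_card {ι : Type*} [Fintype ι] [DecidableEq ι] (h : ι → ℕ)
    (hinj : Function.Injective fun i => h i % k) :
    #(Finset.range k \ Finset.univ.image (fun i => h i % k)) + Fintype.card ι = k := by
  have hsub : Finset.univ.image (fun i => h i % k) ⊆ Finset.range k := by
    simp [Finset.image_subset_iff, Nat.mod_lt _ k.pos]
  rw [← Finset.card_univ, ← Finset.card_image_of_injective _ hinj,
    Finset.card_sdiff_add_card_eq_card hsub, Finset.card_range]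

end residueClass

section measure

variable {μ : Set ℕ+ → ℝ}

theorem measure_empty (hhom : AffineHomogeneous μ) : μ ∅ = 0 := by
  have h := hhom ∅ 1 2
  rw [Set.image_empty, PNat.val_ofNat] at h
  norm_num at h
  linarith

theorem measure_singleton_add_one (hhom : AffineHomogeneous μ) (x : ℕ+) :
    μ {x + 1} = μ {x} := by
  simpa using hhom {x} 1 1

theorem measure_singleton (hhom : AffineHomogeneous μ) (x : ℕ+) : μ {x} = 0 := by
  have hconst : ∀ y : ℕ+, μ {y} = μ {1} := fun y => by
    induction y using PNat.recOn with
    | one => rfl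
    | succ y ih => rw [measure_singleton_add_one hhom, ih]
  -- `{3}` is both a singleton and the image of `{1}` under `x ↦ 2x + 1`
  have h := hhom {1} 1 2
  rw [Set.image_singleton, hconst, hconst, PNat.val_ofNat] at h
  norm_num at h
  rw [hconst]
  linarith

theorem measure_biUnion_le (hsub : UnionSubadditive μ) (hhom : AffineHomogeneous μ)
    {ι : Type*} (s : Finset ι) (E : ι → Set ℕ+) :
    μ (⋃ i ∈ s, E i) ≤ ∑ i ∈ s, μ (E i) :=
  s.apply_union_le_sum (measure_empty hhom) fun {_ _} => hsub _ _

theorem measure_finite_nonpos (hsub : UnionSubadditive μ) (hhom : AffineHomogeneous μ)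
    {S : Set ℕ+} (hS : S.Finite) : μ S ≤ 0 := by
  calc μ S = μ (⋃ x ∈ hS.toFinset, {x}) := by simp
    _ ≤ ∑ x ∈ hS.toFinset, μ {x} := measure_biUnion_le hsub hhom _ _
    _ = 0 := by simp [measure_singleton hhom]

theorem measure_residueClass_pnat (huniv : μ Set.univ = 1) (hhom : AffineHomogeneous μ)
    (k p : ℕ+) : μ (residueClass k p) = ((k : ℕ) : ℝ)⁻¹ := by
  rw [residueClass_eq_range, ← Set.image_univ, hhom, huniv, mul_one]

theorem measure_residueClass_le (huniv : μ Set.univ = 1) (hsub : UnionSubadditive μ)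
    (hhom : AffineHomogeneous μ) (k : ℕ+) (r : ℕ) :
    μ (residueClass k r) ≤ ((k : ℕ) : ℝ)⁻¹ := by
  let p : ℕ+ := ⟨k + r, by positivity⟩
  calc μ (residueClass k r) = μ ({p} ∪ residueClass k p) := by
        rw [residueClass_eq_insert r p rfl, Set.insert_eq]
    _ ≤ μ {p} + μ (residueClass k p) := hsub _ _
    _ = ((k : ℕ) : ℝ)⁻¹ := by
        rw [measure_singleton hhom, measure_residueClass_pnat huniv hhom, zero_add]

theorem measure_biUnion_residueClass_le (huniv : μ Set.univ = 1) (hsub : UnionSubadditive μ)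
    (hhom : AffineHomogeneous μ) (k : ℕ+) {ι : Type*} (s : Finset ι) (r : ι → ℕ) :
    μ (⋃ i ∈ s, residueClass k (r i)) ≤ #s / ((k : ℕ) : ℝ) :=
  calc μ (⋃ i ∈ s, residueClass k (r i)) ≤ ∑ i ∈ s, μ (residueClass k (r i)) :=
        measure_biUnion_le hsub hhom _ _
    _ ≤ ∑ _i ∈ s, ((k : ℕ) : ℝ)⁻¹ :=
        Finset.sum_le_sum fun i _ => measure_residueClass_le huniv hsub hhom k (r i)
    _ = #s / ((k : ℕ) : ℝ) := by rw [Finset.sum_const, nsmul_eq_mul, div_eq_mul_inv]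

end measure

end PNatDensity

open PNatDensity

theorem stmt4 (μ : Set ℕ+ → ℝ)
    (huniv : μ Set.univ = 1)
    (hsub : ∀ X Y : Set ℕ+, μ (X ∪ Y) ≤ μ X + μ Y)
    (hhom : ∀ (X : Set ℕ+) (h k : ℕ+),
      μ ((fun x => k * x + h) '' X) = ((k : ℕ) : ℝ)⁻¹ * μ X)
    (k : ℕ+) (n : ℕ) (h : Fin n → ℕ)
    (hinc : ∀ i j : Fin n, i ≠ j → h i % (k : ℕ) ≠ h j % (k : ℕ)) :
    μ (⋃ i : Fin n, {x : ℕ+ | ∃ m : ℕ+, (x : ℕ) = (k : ℕ) * (m : ℕ) + h i})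
      = (n : ℝ) / ((k : ℕ) : ℝ) := by
  change μ (⋃ i, residueClass k (h i)) = _
  set X := ⋃ i, residueClass k (h i)
  set T := Finset.range k \ Finset.univ.image fun i => h i % (k : ℕ)
  set Y := ⋃ r ∈ T, residueClass k r
  obtain ⟨G, hG, hcover⟩ := exists_finite_univ_subset_residueClass_cover (k := k) h
  have hcard : (#T : ℝ) + n = k := by
    have hinj : Function.Injective fun i => h i % (k : ℕ) :=
      fun i j hij => by_contra fun hne => hinc i j hne hij
    exact_mod_cast Fintype.card_fin n ▸ card_range_sdiff_image_mod_add_card h hinj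
  have hupper : μ X ≤ n / k := by
    simpa using measure_biUnion_residueClass_le huniv hsub hhom k Finset.univ h
  have hlower : 1 ≤ μ X + #T / k := by
    calc 1 = μ (X ∪ Y ∪ G) := by rw [Set.univ_subset_iff.mp hcover, huniv]
      _ ≤ μ X + μ Y + μ G := by linarith [hsub (X ∪ Y) G, hsub X Y]
      _ ≤ μ X + #T / k + 0 := by
          gcongr
          · exact measure_biUnion_residueClass_le huniv hsub hhom k T id
          · exact measure_finite_nonpos hsub hhom hG
      _ = μ X + #T / k := add_zero _
  have hk : ((k : ℕ) : ℝ) ≠ 0 := by positivity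
  have hsplit : (n : ℝ) / k = 1 - #T / k := by
    rw [eq_sub_iff_add_eq, ← add_div, add_comm, hcard, div_self hk]
  linarith
end

section
/- Let μ* : 𝒫(ℕ⁺) → ℝ satisfy μ*(ℕ⁺) = 1, subadditivity, and μ*(k·X + h) = (1/k)·μ*(X) for all X ⊆ ℕ⁺ and h, k ∈ ℕ⁺. Then every rational number in [0,1] lies in the image of μ*. -/
/-!
Homogeneity under `x ↦ k x + h` forces `μ ∅ = 0` and kills every singleton, since `{3}` is the
image of `{1}` both under `x ↦ x + 2` and under `x ↦ 2x + 1`. Fix `b`: the residue classes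
`b ℕ⁺ + i` (`1 ≤ i ≤ b`) each have `μ = 1/b`, and together with the finite set `{1, …, b}` they
cover `ℕ⁺`. Subadditivity bounds the union of `a` of these classes by `a/b` from above, and,
applied to the cover, bounds it from below by `1 - (b - a)/b`.
-/

open Finset

namespace UpperQuasiDensity

def AffineHomogeneous (μ : Set ℕ+ → ℝ) : Prop :=
  ∀ (X : Set ℕ+) (h k : ℕ+), μ ((fun x => k * x + h) '' X) = ((k : ℕ) : ℝ)⁻¹ * μ X

variable {μ : Set ℕ+ → ℝ}

/-- The class `{b x + i + 1 | x ∈ ℕ⁺}`; it omits the least element `i + 1` of the residue class. -/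
def residueClass (b : ℕ+) (i : ℕ) : Set ℕ+ :=
  Set.range fun x : ℕ+ => b * x + i.succPNat

theorem empty_eq_zero (hhom : AffineHomogeneous μ) : μ ∅ = 0 := by
  have h := hhom ∅ 1 2
  rw [Set.image_empty] at h
  norm_num at h
  linarith

theorem singleton_eq_zero (hhom : AffineHomogeneous μ) (n : ℕ+) : μ {n} = 0 := by
  have translate (k h : ℕ+) : μ {k + h} = ((k : ℕ) : ℝ)⁻¹ * μ {1} := by
    simpa only [Set.image_singleton, mul_one] using hhom {1} h k
  have hone : μ {1} = 0 := by
    have h₁ := translate 1 2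
    have h₂ := translate 2 1
    rw [show (2 : ℕ+) + 1 = 1 + 2 from rfl, h₁] at h₂
    norm_num at h₂
    linarith
  rcases (one_le : 1 ≤ n).eq_or_lt with rfl | hn
  · exact hone
  · rw [← PNat.add_sub_of_lt hn, translate, hone, mul_zero]

theorem residueClass_eq (huniv : μ Set.univ = 1) (hhom : AffineHomogeneous μ)
    (b : ℕ+) (i : ℕ) :
    μ (residueClass b i) = ((b : ℕ) : ℝ)⁻¹ := by
  rw [residueClass, ← Set.image_univ, hhom, huniv, mul_one]

theorem residueClasses_union_initialSegment (b : ℕ+) :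
    (⋃ i ∈ range b, residueClass b i) ∪ (⋃ i ∈ range b, {i.succPNat}) = Set.univ := by
  refine Set.eq_univ_of_forall fun n => ?_
  obtain ⟨m, rfl⟩ : ∃ m : ℕ, n = m.succPNat := ⟨n.natPred, n.succPNat_natPred.symm⟩
  simp only [Set.mem_union, Set.mem_iUnion, Set.mem_singleton_iff, mem_range, residueClass,
    Set.mem_range, exists_prop, Nat.succPNat_inj]
  rcases lt_or_ge m b with hm | hm
  · exact .inr ⟨m, hm, rfl⟩
  · refine .inl ⟨m % b, Nat.mod_lt _ b.pos, ⟨m / b, Nat.div_pos hm b.pos⟩, PNat.eq ?_⟩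
    have := Nat.div_add_mod m b
    show b * (m / b) + (m % b + 1) = m + 1
    omega

theorem biUnion_residueClass_eq (huniv : μ Set.univ = 1)
    (hsub : ∀ X Y : Set ℕ+, μ (X ∪ Y) ≤ μ X + μ Y) (hhom : AffineHomogeneous μ)
    {b : ℕ+} {s : Finset ℕ} (hs : s ⊆ range b) :
    μ (⋃ i ∈ s, residueClass b i) = #s / b := by
  have union_le_sum (t : Finset ℕ) (A : ℕ → Set ℕ+) : μ (⋃ i ∈ t, A i) ≤ ∑ i ∈ t, μ (A i) :=
    apply_union_le_sum (empty_eq_zero hhom) (hsub _ _) t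
  have classes_le (t : Finset ℕ) : μ (⋃ i ∈ t, residueClass b i) ≤ #t / b := by
    simpa [residueClass_eq huniv hhom, div_eq_mul_inv] using union_le_sum t (residueClass b)
  have initial_le : μ (⋃ i ∈ range b, {i.succPNat}) ≤ 0 := by
    simpa [singleton_eq_zero hhom] using union_le_sum (range b) fun i => {i.succPNat}
  have cover_ge : 1 ≤ μ (⋃ i ∈ s, residueClass b i) + μ (⋃ i ∈ range b \ s, residueClass b i)
      + μ (⋃ i ∈ range b, {i.succPNat}) := by
    have cover := residueClasses_union_initialSegment b
    rw [← union_sdiff_of_subset hs, set_biUnion_union, union_sdiff_of_subset hs] at cover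
    rw [← huniv, ← cover]
    exact (hsub _ _).trans (add_le_add_left (hsub _ _) _)
  have hcard : (#(range b \ s) : ℝ) = b - #s := by
    rw [card_sdiff_of_subset hs, card_range, Nat.cast_sub (by simpa using card_le_card hs)]
  have hb : (0 : ℝ) < b := by exact_mod_cast b.pos
  refine le_antisymm (classes_le s) ?_
  have := classes_le (range b \ s)
  rw [hcard, sub_div, div_self hb.ne'] at this
  linarith

theorem exists_eq_div (huniv : μ Set.univ = 1)
    (hsub : ∀ X Y : Set ℕ+, μ (X ∪ Y) ≤ μ X + μ Y) (hhom : AffineHomogeneous μ)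
    {a : ℕ} {b : ℕ+} (hab : a ≤ b) :
    ∃ X : Set ℕ+, μ X = a / b :=
  ⟨⋃ i ∈ range a, residueClass b i, by
    rw [biUnion_residueClass_eq huniv hsub hhom (range_subset_range.mpr hab), card_range]⟩

end UpperQuasiDensity

open UpperQuasiDensity in
theorem stmt5 (μ : Set ℕ+ → ℝ)
    (huniv : μ Set.univ = 1)
    (hsub : ∀ X Y : Set ℕ+, μ (X ∪ Y) ≤ μ X + μ Y)
    (hhom : ∀ (X : Set ℕ+) (h k : ℕ+),
      μ ((fun x => k * x + h) '' X) = ((k : ℕ) : ℝ)⁻¹ * μ X) :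
    ∀ q : ℚ, 0 ≤ q → q ≤ 1 → ∃ X : Set ℕ+, μ X = (q : ℝ) := by
  intro q hq0 hq1
  obtain ⟨a, ha⟩ := Int.eq_ofNat_of_zero_le (Rat.num_nonneg.mpr hq0)
  have hq : (q : ℝ) = a / q.den := by rw [Rat.cast_def, ha, Int.cast_natCast]
  have hab : a ≤ q.den := by
    rw [← Rat.num_div_den q, ha, div_le_one (by exact_mod_cast q.den_pos)] at hq1
    exact_mod_cast hq1
  obtain ⟨X, hX⟩ := exists_eq_div (b := ⟨q.den, q.den_pos⟩) huniv hsub hhom hab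
  exact ⟨X, hX.trans hq.symm⟩
end

section
/- Let μ* : 𝒫(ℕ⁺) → ℝ be an upper quasi-density, i.e. μ*(ℕ⁺) = 1, μ*(X) ≤ 1 for all X, μ*(X ∪ Y) ≤ μ*(X) + μ*(Y), and μ*(k·X + h) = (1/k)·μ*(X) for all X and h, k ∈ ℕ⁺. Suppose (kᵢ)ᵢ≥1 and (hᵢ)ᵢ≥1 are sequences with kᵢ ≥ 1, kᵢ ∣ kᵢ₊₁ for all i, and for i < j there is no integer x with kᵢx + hᵢ ≡ hⱼ (mod kⱼ). Then for every n, μ*(⋃ᵢ₌₁ⁿ (kᵢ·ℕ⁺ + hᵢ)) = Σᵢ₌₁ⁿ 1/kᵢ. -/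
/-! For the upper bound, subadditivity reduces everything to `μ (k·ℕ⁺ + h) ≤ 1/k`. For the lower
bound put `K = kₙ`: every `kᵢ` divides `K`, and the incongruence hypothesis makes the classes
`hᵢ mod kᵢ` pairwise disjoint, so together they contain `∑ K/kᵢ` of the `K` classes mod `K`. The
union `U` of the progressions, the remaining `K - ∑ K/kᵢ` classes mod `K` and a finite set cover
`ℕ⁺`; as `μ` vanishes on finite sets and is at most `1/K` on a class mod `K`,
`1 = μ ℕ⁺ ≤ μ U + 1 - ∑ 1/kᵢ`. No monotonicity of `μ` is available, which is why `ℕ⁺` itself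
is covered rather than the complement of `U` bounded. -/

open Finset

-- `progression a r` is `a·ℕ⁺ + r`.
def progression (a r : ℕ) : Set ℕ+ := {x | ∃ m : ℕ+, (x : ℕ) = a * m + r}

theorem mem_progression {a r : ℕ} (ha : 0 < a) {x : ℕ+} :
    x ∈ progression a r ↔ r < x ∧ (x : ℕ) ≡ r [MOD a] := by
  constructor
  · rintro ⟨m, hm⟩
    refine ⟨?_, ?_⟩
    · rw [hm]; have := Nat.mul_pos ha m.pos; omega
    · rw [hm, Nat.ModEq, Nat.mul_add_mod]
  · rintro ⟨hlt, hmod⟩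
    obtain ⟨m, hm⟩ := (Nat.modEq_iff_dvd' hlt.le).1 hmod.symm
    have hm0 : 0 < m := Nat.pos_of_ne_zero (by rintro rfl; omega)
    exact ⟨⟨m, hm0⟩, by simp only [PNat.mk_coe]; omega⟩

theorem progression_eq_insert_image {a b : ℕ+} {r : ℕ} (hb : (b : ℕ) = a + r) :
    progression a r = insert b ((fun x => a * x + b) '' Set.univ) := by
  ext x
  simp only [progression, Set.image_univ, Set.mem_ofPred_eq]
  constructor
  · rintro ⟨m, hm⟩
    rcases eq_or_ne m 1 with rfl | hm1
    · exact Or.inl (PNat.eq (by simp [hm, hb]))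
    · obtain ⟨y, rfl⟩ := PNat.exists_eq_succ_of_ne_one hm1
      exact Or.inr ⟨y, PNat.eq (by simp [hm, hb]; ring)⟩
  · rintro (rfl | ⟨y, rfl⟩)
    · exact ⟨1, by simp [hb]⟩
    · exact ⟨y + 1, by simp [hb]; ring⟩

theorem biUnion_progression_union_eq_univ {ι : Type*} (s : Finset ι) (a : ι → ℕ+) (r : ι → ℕ)
    (K : ℕ+) (hdvd : ∀ i ∈ s, (a i : ℕ) ∣ K) :
    (⋃ i ∈ s, progression (a i) (r i)) ∪
      (⋃ ρ ∈ {ρ ∈ range K | ∀ i ∈ s, ¬ ρ ≡ r i [MOD a i]}, progression K ρ) ∪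
      {x : ℕ+ | (x : ℕ) ≤ K + ∑ i ∈ s, r i} = Set.univ := by
  refine Set.eq_univ_of_forall fun x => ?_
  simp only [Set.mem_union, Set.mem_iUnion, mem_filter, mem_range, Set.mem_ofPred_eq,
    mem_progression (a _).pos, mem_progression K.pos, exists_prop]
  by_cases hres : ∀ i ∈ s, ¬ (x : ℕ) % K ≡ r i [MOD a i]
  · by_cases hx : (x : ℕ) % K < x
    · exact Or.inl (Or.inr ⟨_, ⟨Nat.mod_lt _ K.pos, hres⟩, hx, (Nat.mod_modEq _ _).symm⟩)
    · exact Or.inr (by have := Nat.mod_lt (x : ℕ) K.pos; omega)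
  · obtain ⟨i, hi, hxi⟩ : ∃ i ∈ s, (x : ℕ) % K ≡ r i [MOD a i] := by simpa using hres
    have hxi : (x : ℕ) ≡ r i [MOD a i] := ((Nat.mod_modEq _ _).symm.of_dvd (hdvd i hi)).trans hxi
    by_cases hx : r i < x
    · exact Or.inl (Or.inl ⟨i, hi, hx, hxi⟩)
    · exact Or.inr (by have := single_le_sum (fun j _ => Nat.zero_le (r j)) hi; omega)

theorem disjoint_modEq_of_not_exists_modEq {a b c d : ℕ} (hab : a ∣ b)
    (h : ¬ ∃ x : ℤ, Int.ModEq b (a * x + c) d) :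
    Disjoint {x : ℕ | x ≡ c [MOD a]} {x : ℕ | x ≡ d [MOD b]} := by
  refine Set.disjoint_left.2 fun x (hxc : x ≡ c [MOD a]) (hxd : x ≡ d [MOD b]) => h ?_
  obtain ⟨t, ht⟩ := Nat.modEq_iff_dvd.1 (hxc.symm.trans (hxd.of_dvd hab))
  exact ⟨t, by rw [← ht]; ring_nf; rfl⟩

theorem card_filter_range_forall_not_modEq_add_sum {ι : Type*} (K : ℕ) (s : Finset ι)
    (a r : ι → ℕ) (ha : ∀ i ∈ s, 0 < a i) (hdvd : ∀ i ∈ s, a i ∣ K)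
    (hdisj : (s : Set ι).PairwiseDisjoint fun i => {x : ℕ | x ≡ r i [MOD a i]}) :
    #{x ∈ range K | ∀ i ∈ s, ¬ x ≡ r i [MOD a i]} + ∑ i ∈ s, K / a i = K := by
  classical
  set residues := fun i => {x ∈ range K | x ≡ r i [MOD a i]}
  have hcard : ∀ i ∈ s, #(residues i) = K / a i := fun i hi => by
    rw [← Nat.count_eq_card_filter_range, Nat.count_modEq_card _ (ha i hi),
      Nat.mod_eq_zero_of_dvd (hdvd i hi)]
    simp
  have hresidues : (s : Set ι).PairwiseDisjoint residues := fun i hi j hj hij =>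
    Finset.disjoint_left.2 fun x hxi hxj =>
      Set.disjoint_left.1 (hdisj hi hj hij) (mem_filter.1 hxi).2 (mem_filter.1 hxj).2
  have hcompl :
      {x ∈ range K | ∀ i ∈ s, ¬ x ≡ r i [MOD a i]} = range K \ s.biUnion residues := by
    ext x
    simp only [residues, mem_filter, mem_sdiff, mem_biUnion]
    grind
  rw [hcompl, ← sum_congr rfl hcard, ← card_biUnion hresidues,
    card_sdiff_add_card_eq_card (biUnion_subset.2 fun i _ => filter_subset _ _), card_range]

def IsAffineHomogeneous (μ : Set ℕ+ → ℝ) : Prop :=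
  ∀ (X : Set ℕ+) (h k : ℕ+), μ ((fun x => k * x + h) '' X) = ((k : ℕ) : ℝ)⁻¹ * μ X

namespace IsAffineHomogeneous

variable {μ : Set ℕ+ → ℝ}

theorem apply_empty (hμ : IsAffineHomogeneous μ) : μ ∅ = 0 := by
  have h := hμ ∅ 1 2
  rw [Set.image_empty] at h
  norm_num at h
  linarith

theorem apply_singleton (hμ : IsAffineHomogeneous μ) (a : ℕ+) : μ {a} = 0 := by
  have h₂ := hμ {a} 1 2
  have h₁ := hμ {a} (a + 1) 1
  simp only [Set.image_singleton, one_mul] at h₁ h₂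
  rw [show a + (a + 1) = 2 * a + 1 by ring] at h₁
  norm_num at h₁ h₂
  linarith

theorem apply_le_zero_of_finite (hμ : IsAffineHomogeneous μ)
    (hsub : ∀ X Y : Set ℕ+, μ (X ∪ Y) ≤ μ X + μ Y) {S : Set ℕ+} (hS : S.Finite) : μ S ≤ 0 := by
  have h := hS.toFinset.apply_union_le_sum hμ.apply_empty (hsub _ _) (s := fun a => {a})
  simpa [hμ.apply_singleton] using h

theorem apply_progression_le (hμ : IsAffineHomogeneous μ) (huniv : μ Set.univ = 1)
    (hsub : ∀ X Y : Set ℕ+, μ (X ∪ Y) ≤ μ X + μ Y) (a : ℕ+) (r : ℕ) :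
    μ (progression a r) ≤ ((a : ℕ) : ℝ)⁻¹ := by
  obtain ⟨b, hb⟩ : ∃ b : ℕ+, (b : ℕ) = a + r := ⟨⟨a + r, by positivity⟩, rfl⟩
  rw [progression_eq_insert_image hb, Set.insert_eq]
  calc μ ({b} ∪ _) ≤ μ {b} + μ ((fun x => a * x + b) '' Set.univ) := hsub _ _
    _ = ((a : ℕ) : ℝ)⁻¹ := by rw [hμ.apply_singleton, hμ, huniv, zero_add, mul_one]

theorem sum_inv_le_apply_biUnion_progression (hμ : IsAffineHomogeneous μ)
    (huniv : μ Set.univ = 1)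
    (hsub : ∀ X Y : Set ℕ+, μ (X ∪ Y) ≤ μ X + μ Y) {ι : Type*} (s : Finset ι) (a : ι → ℕ+)
    (r : ι → ℕ) (K : ℕ+) (hdvd : ∀ i ∈ s, (a i : ℕ) ∣ K)
    (hdisj : (s : Set ι).PairwiseDisjoint fun i => {x : ℕ | x ≡ r i [MOD a i]}) :
    ∑ i ∈ s, ((a i : ℕ) : ℝ)⁻¹ ≤ μ (⋃ i ∈ s, progression (a i) (r i)) := by
  set R := {ρ ∈ range K | ∀ i ∈ s, ¬ ρ ≡ r i [MOD a i]}
  set U := ⋃ i ∈ s, progression (a i) (r i)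
  set V := ⋃ ρ ∈ R, progression K ρ
  set F := {x : ℕ+ | (x : ℕ) ≤ K + ∑ i ∈ s, r i}
  have hcard_R : (#R : ℝ) = K * (1 - ∑ i ∈ s, ((a i : ℕ) : ℝ)⁻¹) := by
    have hcast : ∀ i ∈ s, (((K : ℕ) / (a i : ℕ) : ℕ) : ℝ) = K * ((a i : ℕ) : ℝ)⁻¹ :=
      fun i hi => by rw [Nat.cast_div (hdvd i hi) (by positivity), div_eq_mul_inv]
    rw [mul_sub, mul_one, mul_sum, ← sum_congr rfl hcast, eq_sub_iff_add_eq]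
    exact_mod_cast card_filter_range_forall_not_modEq_add_sum K s (fun i => a i) r
      (fun i _ => (a i).pos) hdvd hdisj
  have hV : μ V ≤ 1 - ∑ i ∈ s, ((a i : ℕ) : ℝ)⁻¹ :=
    calc μ V ≤ ∑ ρ ∈ R, μ (progression K ρ) := R.apply_union_le_sum hμ.apply_empty (hsub _ _)
      _ ≤ ∑ ρ ∈ R, ((K : ℕ) : ℝ)⁻¹ :=
        sum_le_sum fun ρ _ => hμ.apply_progression_le huniv hsub K ρ
      _ = 1 - ∑ i ∈ s, ((a i : ℕ) : ℝ)⁻¹ := by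
        rw [sum_const, nsmul_eq_mul, hcard_R]; field_simp
  have hF : μ F ≤ 0 :=
    hμ.apply_le_zero_of_finite hsub ((Set.finite_le_nat _).preimage PNat.coe_injective.injOn)
  have hcover : (1 : ℝ) ≤ μ U + μ V + μ F :=
    calc (1 : ℝ) = μ (U ∪ V ∪ F) := by
          rw [biUnion_progression_union_eq_univ s a r K hdvd, huniv]
      _ ≤ μ (U ∪ V) + μ F := hsub _ _
      _ ≤ μ U + μ V + μ F := by gcongr; exact hsub _ _
  linarith

end IsAffineHomogeneous

theorem stmt6_general (μ : Set ℕ+ → ℝ)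
    (huniv : μ Set.univ = 1)
    (hsub : ∀ X Y : Set ℕ+, μ (X ∪ Y) ≤ μ X + μ Y)
    (hhom : ∀ (X : Set ℕ+) (h k : ℕ+),
      μ ((fun x => k * x + h) '' X) = ((k : ℕ) : ℝ)⁻¹ * μ X)
    (k : ℕ → ℕ+) (h : ℕ → ℕ)
    (hdvd : ∀ i, 1 ≤ i → (k i : ℕ) ∣ (k (i + 1) : ℕ))
    (hnc : ∀ i j, 1 ≤ i → i < j →
      ¬ ∃ x : ℤ, Int.ModEq ((k j : ℕ) : ℤ) (((k i : ℕ) : ℤ) * x + (h i : ℤ)) (h j : ℤ)) :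
    ∀ n, 1 ≤ n →
      μ (⋃ i ∈ Finset.Icc 1 n, {x : ℕ+ | ∃ m : ℕ+, (x : ℕ) = (k i : ℕ) * (m : ℕ) + h i})
        = ∑ i ∈ Finset.Icc 1 n, ((k i : ℕ) : ℝ)⁻¹ := by
  intro n _
  have hμ : IsAffineHomogeneous μ := hhom
  have hchain : ∀ ⦃i j⦄, 1 ≤ i → i ≤ j → (k i : ℕ) ∣ k j :=
    Nat.rel_of_forall_rel_succ_of_le_of_le (· ∣ ·) hdvd
  have hdisj : ((Icc 1 n : Finset ℕ) : Set ℕ).PairwiseDisjoint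
      fun i => {x : ℕ | x ≡ h i [MOD k i]} := by
    intro i hi j hj hij
    rcases hij.lt_or_gt with hlt | hlt
    · exact disjoint_modEq_of_not_exists_modEq (hchain (mem_Icc.1 hi).1 hlt.le)
        (hnc i j (mem_Icc.1 hi).1 hlt)
    · exact (disjoint_modEq_of_not_exists_modEq (hchain (mem_Icc.1 hj).1 hlt.le)
        (hnc j i (mem_Icc.1 hj).1 hlt)).symm
  apply le_antisymm
  · exact ((Icc 1 n).apply_union_le_sum hμ.apply_empty (hsub _ _)).trans
      (sum_le_sum fun i _ => hμ.apply_progression_le huniv hsub (k i) (h i))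
  · exact hμ.sum_inv_le_apply_biUnion_progression huniv hsub _ k h (k n)
      (fun i hi => hchain (mem_Icc.1 hi).1 (mem_Icc.1 hi).2) hdisj

theorem stmt6 (μ : Set ℕ+ → ℝ)
    (huniv : μ Set.univ = 1) (hle : ∀ X : Set ℕ+, μ X ≤ 1)
    (hsub : ∀ X Y : Set ℕ+, μ (X ∪ Y) ≤ μ X + μ Y)
    (hhom : ∀ (X : Set ℕ+) (h k : ℕ+),
      μ ((fun x => k * x + h) '' X) = ((k : ℕ) : ℝ)⁻¹ * μ X)
    (k : ℕ → ℕ+) (h : ℕ → ℕ)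
    (hdvd : ∀ i, 1 ≤ i → (k i : ℕ) ∣ (k (i + 1) : ℕ))
    (hnc : ∀ i j, 1 ≤ i → i < j →
      ¬ ∃ x : ℤ, Int.ModEq ((k j : ℕ) : ℤ) (((k i : ℕ) : ℤ) * x + (h i : ℤ)) (h j : ℤ)) :
    ∀ n, 1 ≤ n →
      μ (⋃ i ∈ Finset.Icc 1 n, {x : ℕ+ | ∃ m : ℕ+, (x : ℕ) = (k i : ℕ) * (m : ℕ) + h i})
        = ∑ i ∈ Finset.Icc 1 n, ((k i : ℕ) : ℝ)⁻¹ :=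
  stmt6_general μ huniv hsub hhom k h hdvd hnc
end

section
/- Let μ* : 𝒫(ℕ⁺) → ℝ be an upper quasi-density (μ*(ℕ⁺) = 1, μ* ≤ 1, subadditive, and μ*(k·X + h) = (1/k)μ*(X) for all positive h, k). If X ⊆ Y ⊆ ℕ⁺ and Y differs from a finite union of arithmetic progressions of ℕ⁺ by finitely many elements, then μ*(X) ≤ μ*(Y). (Monotonicity holds when the larger set is eventually periodic, even without assuming monotonicity of μ*.) -/
/-!
Let `K` be a common multiple of the moduli of the progressions. Up to finitely many elements, `Y` is
the set of positive integers whose residue modulo `K` lies in some set `T` of residues.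
Translation invariance (`k = 1`) and scaling by `2` make points null, so by subadditivity finite
sets are null, and every subset of a residue class modulo `K` has `μ ≤ 1/K`. Covering `X` by the
classes in `T` gives `μ X ≤ #T / K`, while `1 = μ ℕ⁺ ≤ μ Y + μ Yᶜ ≤ μ Y + (K - #T) / K`
gives `#T / K ≤ μ Y`.
-/

open scoped symmDiff

def arithProg (k h : ℕ) : Set ℕ+ := {x | ∃ m : ℕ+, (x : ℕ) = k * m + h}

def residueSet (K : ℕ) (T : Finset ℕ) : Set ℕ+ := {x | (x : ℕ) % K ∈ T}

lemma mem_arithProg_iff {k h : ℕ} {x : ℕ+} :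
    x ∈ arithProg k h ↔ (x : ℕ) ≡ h [MOD k] ∧ k + h ≤ x := by
  constructor
  · rintro ⟨m, hm⟩
    rw [hm]
    refine ⟨by simp [Nat.ModEq], ?_⟩
    nlinarith [m.pos]
  · rintro ⟨hmod, hle⟩
    obtain ⟨c, hc⟩ := (Nat.modEq_iff_dvd' (by omega)).1 hmod.symm
    rcases Nat.eq_zero_or_pos c with rfl | hc0
    · exact ⟨1, by simp at hc ⊢; omega⟩
    · exact ⟨⟨c, hc0⟩, by simp only [PNat.mk_coe]; omega⟩

lemma finite_setOf_coe_le (B : ℕ) : {x : ℕ+ | (x : ℕ) ≤ B}.Finite :=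
  (Set.finite_le_nat B).preimage PNat.coe_injective.injOn

lemma exists_finite_symmDiff_iUnion_arithProg_residueSet {ι : Type*} [Finite ι] (k h : ι → ℕ)
    {K : ℕ} (hK : 0 < K) (hk : ∀ i, k i ∣ K) :
    ∃ T ⊆ Finset.range K, ((⋃ i, arithProg (k i) (h i)) ∆ residueSet K T).Finite := by
  classical
  have := Fintype.ofFinite ι
  refine ⟨(Finset.range K).filter fun r => ∃ i, r ≡ h i [MOD k i], Finset.filter_subset _ _,
    (finite_setOf_coe_le (∑ i, (k i + h i))).subset fun x hx => ?_⟩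
  by_contra hB
  have hbig : ∀ i, k i + h i ≤ x := fun i =>
    (Finset.single_le_sum (fun j _ => Nat.zero_le (k j + h j)) (Finset.mem_univ i)).trans
      (le_of_not_ge hB)
  have hmem : x ∈ ⋃ i, arithProg (k i) (h i) ↔
      x ∈ residueSet K ((Finset.range K).filter fun r => ∃ i, r ≡ h i [MOD k i]) := by
    simp only [Set.mem_iUnion, mem_arithProg_iff, residueSet, Set.mem_ofPred_eq,
      Finset.mem_filter, Finset.mem_range, Nat.mod_lt _ hK, true_and]
    exact exists_congr fun i =>
      ⟨fun H => ((Nat.mod_modEq x K).of_dvd (hk i)).trans H.1,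
        fun H => ⟨((Nat.mod_modEq x K).of_dvd (hk i)).symm.trans H, hbig i⟩⟩
  rw [Set.mem_symmDiff, hmem] at hx
  tauto

section UpperQuasiDensity

variable {μ : Set ℕ+ → ℝ}
  (hhom : ∀ (X : Set ℕ+) (h k : ℕ+), μ ((fun x => k * x + h) '' X) = ((k : ℕ) : ℝ)⁻¹ * μ X)
include hhom

lemma mu_empty : μ ∅ = 0 := by
  have h := hhom ∅ 1 2
  norm_num at h
  linarith

lemma mu_singleton (a : ℕ+) : μ {a} = 0 := by
  have shift : ∀ x h : ℕ+, μ {x + h} = μ {x} := fun x h => by simpa using hhom {x} h 1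
  have h1 : μ {1} = 0 := by
    have h := hhom {1} 1 2
    simp only [Set.image_singleton, mul_one, PNat.val_ofNat, Nat.cast_ofNat] at h
    rw [show (2 + 1 : ℕ+) = 1 + 2 from rfl, shift] at h
    linarith
  rcases eq_or_ne a 1 with rfl | ha
  · exact h1
  · obtain ⟨b, rfl⟩ := PNat.exists_eq_succ_of_ne_one ha
    rw [add_comm, shift, h1]

variable (hsub : ∀ X Y : Set ℕ+, μ (X ∪ Y) ≤ μ X + μ Y)
include hsub

lemma mu_le_zero_of_finite {F : Set ℕ+} (hF : F.Finite) : μ F ≤ 0 := by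
  induction F, hF using Set.Finite.induction_on with
  | empty => exact (mu_empty hhom).le
  | @insert a s _ _ ih =>
    rw [Set.insert_eq]
    linarith [hsub {a} s, mu_singleton hhom a]

lemma mu_biUnion_le {ι : Type*} (s : Finset ι) (A : ι → Set ℕ+) :
    μ (⋃ i ∈ s, A i) ≤ ∑ i ∈ s, μ (A i) := by
  classical
  induction s using Finset.induction_on with
  | empty => simp [mu_empty hhom]
  | insert a s ha ih =>
    rw [Finset.set_biUnion_insert, Finset.sum_insert ha]
    linarith [hsub (A a) (⋃ i ∈ s, A i)]

variable (hle : ∀ X : Set ℕ+, μ X ≤ 1)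
include hle

lemma mu_le_inv_of_modEq {K r : ℕ} (hK : 0 < K) {S : Set ℕ+}
    (hS : ∀ x ∈ S, (x : ℕ) ≡ r [MOD K]) : μ S ≤ (K : ℝ)⁻¹ := by
  -- offset `r + K` rather than `r`: the shifts in `hhom` must be positive
  set f : ℕ+ → ℕ+ := fun x => K.toPNat hK * x + (r + K).toPNat (by omega)
  have hfin : (S \ Set.range f).Finite := by
    refine (finite_setOf_coe_le (r + 2 * K)).subset fun x ⟨hxS, hxf⟩ => ?_
    by_contra hbig
    have hx : x ∈ arithProg K (r + K) :=
      mem_arithProg_iff.2 ⟨(hS x hxS).trans Nat.add_modEq_right.symm, by simp at hbig; omega⟩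
    obtain ⟨m, hm⟩ := hx
    exact hxf ⟨m, PNat.eq hm.symm⟩
  have hrange : μ (S ∩ Set.range f) ≤ (K : ℝ)⁻¹ := by
    rw [← Set.image_preimage_eq_inter_range, hhom]
    exact mul_le_of_le_one_right (by positivity) (hle _)
  calc μ S = μ (S ∩ Set.range f ∪ S \ Set.range f) := by rw [Set.inter_union_sdiff]
    _ ≤ μ (S ∩ Set.range f) + μ (S \ Set.range f) := hsub _ _
    _ ≤ (K : ℝ)⁻¹ := by linarith [mu_le_zero_of_finite hhom hsub hfin]

lemma mu_le_card_div_of_finite_sdiff {K : ℕ} (hK : 0 < K) (T : Finset ℕ) {X : Set ℕ+}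
    (hX : (X \ residueSet K T).Finite) : μ X ≤ T.card / K := by
  have hdecomp : X = (⋃ r ∈ T, X ∩ {x | (x : ℕ) % K = r}) ∪ X \ residueSet K T := by
    ext x
    simp only [Set.mem_union, Set.mem_iUnion, Set.mem_inter_iff, Set.mem_ofPred_eq,
      Set.mem_sdiff, residueSet]
    grind
  have hclass : ∀ r ∈ T, μ (X ∩ {x | (x : ℕ) % K = r}) ≤ (K : ℝ)⁻¹ := fun r _ =>
    mu_le_inv_of_modEq hhom hsub hle hK fun x hx => hx.2 ▸ (Nat.mod_modEq x K).symm
  calc μ X ≤ μ (⋃ r ∈ T, X ∩ {x | (x : ℕ) % K = r}) + μ (X \ residueSet K T) := by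
        conv_lhs => rw [hdecomp]
        exact hsub _ _
    _ ≤ ∑ r ∈ T, (K : ℝ)⁻¹ + 0 :=
        add_le_add ((mu_biUnion_le hhom hsub _ _).trans (Finset.sum_le_sum hclass))
          (mu_le_zero_of_finite hhom hsub hX)
    _ = T.card / K := by simp [div_eq_mul_inv]

variable (huniv : μ Set.univ = 1)
include huniv

lemma card_div_le_mu_of_finite_sdiff {K : ℕ} (hK : 0 < K) {T : Finset ℕ}
    (hT : T ⊆ Finset.range K) {Y : Set ℕ+} (hY : (residueSet K T \ Y).Finite) :
    T.card / K ≤ μ Y := by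
  have hc : (Yᶜ \ residueSet K (Finset.range K \ T)).Finite :=
    hY.subset fun x ⟨hxY, hxT⟩ =>
      ⟨by simpa [residueSet, Nat.mod_lt _ hK] using hxT, hxY⟩
  have hYc := mu_le_card_div_of_finite_sdiff hhom hsub hle hK _ hc
  have hcard : ((Finset.range K \ T).card : ℝ) = K - T.card := by
    rw [Finset.card_sdiff_of_subset hT, Finset.card_range,
      Nat.cast_sub (by simpa using Finset.card_le_card hT)]
  have hcover : 1 ≤ μ Y + μ Yᶜ := by
    rw [← huniv, ← Set.union_compl_self Y]
    exact hsub Y Yᶜ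
  rw [hcard, sub_div, div_self (by positivity)] at hYc
  linarith

end UpperQuasiDensity

theorem stmt7 (μ : Set ℕ+ → ℝ)
    (huniv : μ Set.univ = 1) (hle : ∀ X : Set ℕ+, μ X ≤ 1)
    (hsub : ∀ X Y : Set ℕ+, μ (X ∪ Y) ≤ μ X + μ Y)
    (hhom : ∀ (X : Set ℕ+) (h k : ℕ+),
      μ ((fun x => k * x + h) '' X) = ((k : ℕ) : ℝ)⁻¹ * μ X)
    (X Y : Set ℕ+) (hXY : X ⊆ Y)
    (hY : ∃ (n : ℕ) (ks : Fin n → ℕ+) (hs : Fin n → ℕ),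
      ((Y \ (⋃ i : Fin n, {x : ℕ+ | ∃ m : ℕ+, (x : ℕ) = (ks i : ℕ) * (m : ℕ) + hs i})) ∪
       ((⋃ i : Fin n, {x : ℕ+ | ∃ m : ℕ+, (x : ℕ) = (ks i : ℕ) * (m : ℕ) + hs i}) \ Y)).Finite) :
    μ X ≤ μ Y := by
  obtain ⟨n, ks, hs, hfin⟩ := hY
  obtain ⟨K, hK, hdvd⟩ : ∃ K, 0 < K ∧ ∀ i, (ks i : ℕ) ∣ K :=
    ⟨∏ i, (ks i : ℕ), Finset.prod_pos fun i _ => (ks i).pos,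
      fun i => Finset.dvd_prod_of_mem _ (Finset.mem_univ i)⟩
  obtain ⟨T, hT, hUT⟩ :=
    exists_finite_symmDiff_iUnion_arithProg_residueSet (fun i => (ks i : ℕ)) hs hK hdvd
  have hYU : (Y ∆ ⋃ i, arithProg (ks i) (hs i)).Finite := hfin
  have hYT : (Y ∆ residueSet K T).Finite :=
    (hYU.union hUT).subset (symmDiff_triangle Y _ _)
  calc μ X ≤ T.card / K :=
        mu_le_card_div_of_finite_sdiff hhom hsub hle hK T
          (hYT.subset fun x hx => Or.inl ⟨hXY hx.1, hx.2⟩)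
    _ ≤ μ Y :=
        card_div_le_mu_of_finite_sdiff hhom hsub hle huniv hK hT
          (hYT.subset fun x hx => Or.inr hx)
end

section
/- Let (aₙ)ₙ≥1 and (bₙ)ₙ≥1 be sequences of positive reals such that aₙ + 1 ≤ bₙ < aₙ₊₁ for all sufficiently large n, aₙ/bₙ → ℓ, and bₙ/aₙ₊₁ → 0. Fix k ∈ ℕ⁺ and h ∈ ℤ, and let X := (⋃ₙ {m ∈ ℕ : aₙ + 1 ≤ m ≤ bₙ}) ∩ (k·ℤ + h) ∩ ℕ⁺. Then the upper asymptotic density of X equals (1 − ℓ)/k and the lower asymptotic density of X equals 0. -/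
/-! Only the last block `(a q, b q]` below `N` contributes a positive proportion of
`X ∩ [1, N]`: all earlier blocks lie below `b (q - 1) = o(a q)`. Inside that block `X` is an
arithmetic progression of difference `k`, so `|X ∩ [1, N]| ≈ (min N (b q) - a q) / k`, and
`(min N (b q) - a q) / N ≤ 1 - a q / b q → 1 - ℓ`, with equality at `N = b q`. At `N = a q`
the count is `o(N)`, whence lower density `0`. -/

noncomputable def dUpper (X : Set ℕ) : ℝ :=
  Filter.limsup (fun n : ℕ => ((X ∩ Set.Icc 1 n).ncard : ℝ) / n) Filter.atTop

noncomputable def dLower (X : Set ℕ) : ℝ :=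
  Filter.liminf (fun n : ℕ => ((X ∩ Set.Icc 1 n).ncard : ℝ) / n) Filter.atTop

open Filter Set

noncomputable def partialDensity (X : Set ℕ) (N : ℕ) : ℝ := ((X ∩ Icc 1 N).ncard : ℝ) / N

namespace partialDensity

lemma nonneg (X : Set ℕ) (N : ℕ) : 0 ≤ partialDensity X N := by
  unfold partialDensity; positivity

lemma le_one (X : Set ℕ) (N : ℕ) : partialDensity X N ≤ 1 := by
  refine div_le_one_of_le₀ ?_ N.cast_nonneg
  have := ncard_le_ncard (inter_subset_right (s := X)) (finite_Icc 1 N)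
  rw [ncard_Icc_nat, Nat.add_sub_cancel] at this
  exact_mod_cast this

lemma isBoundedUnder_le (X : Set ℕ) : IsBoundedUnder (· ≤ ·) atTop (partialDensity X) :=
  isBoundedUnder_of ⟨1, le_one X⟩

lemma isBoundedUnder_ge (X : Set ℕ) : IsBoundedUnder (· ≥ ·) atTop (partialDensity X) :=
  isBoundedUnder_of ⟨0, nonneg X⟩

end partialDensity

lemma dUpper_eq_of {X : Set ℕ} {L : ℝ}
    (hle : ∀ y > L, ∀ᶠ N in atTop, partialDensity X N ≤ y)
    (hge : ∀ y < L, ∃ᶠ N in atTop, y ≤ partialDensity X N) : dUpper X = L :=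
  le_antisymm
    ((limsup_le_iff' (partialDensity.isBoundedUnder_ge X).isCoboundedUnder_le
      (partialDensity.isBoundedUnder_le X)).2 hle)
    ((le_limsup_iff' (partialDensity.isBoundedUnder_ge X).isCoboundedUnder_le
      (partialDensity.isBoundedUnder_le X)).2 hge)

lemma dLower_eq_zero_of {X : Set ℕ}
    (hfreq : ∀ y > 0, ∃ᶠ N in atTop, partialDensity X N ≤ y) :
    dLower X = 0 :=
  le_antisymm
    ((liminf_le_iff' (partialDensity.isBoundedUnder_le X).isCoboundedUnder_ge
      (partialDensity.isBoundedUnder_ge X)).2 hfreq)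
    (le_liminf_of_le (partialDensity.isBoundedUnder_le X).isCoboundedUnder_ge
      (Eventually.of_forall (partialDensity.nonneg X)))

def progressionIoc (k : ℕ) (h : ℤ) (x y : ℝ) : Set ℕ :=
  {m : ℕ | x < m ∧ (m : ℝ) ≤ y ∧ ∃ t : ℤ, (m : ℤ) = k * t + h}

section progression

variable {k : ℕ} (h : ℤ) {x : ℝ} (y : ℝ)

lemma natCast_image_progressionIoc (hk : 0 < k) (hx : 0 ≤ x) :
    ((↑) : ℕ → ℤ) '' progressionIoc k h x y =
      (fun t : ℤ => k * t + h) '' Ioc ⌊(x - h) / k⌋ ⌊(y - h) / k⌋ := by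
  have hk' : (0 : ℝ) < k := by exact_mod_cast hk
  ext z
  simp only [progressionIoc, mem_ofPred_eq, mem_image, mem_Ioc, Int.floor_lt, Int.le_floor,
    div_lt_iff₀ hk', le_div_iff₀ hk']
  constructor
  · rintro ⟨m, ⟨hxm, hmy, t, ht⟩, rfl⟩
    have hmt : (m : ℝ) = k * t + h := by exact_mod_cast ht
    exact ⟨t, ⟨by linarith, by linarith⟩, ht.symm⟩
  · rintro ⟨t, ⟨hxt, hty⟩, rfl⟩
    have hpos : (0 : ℝ) ≤ k * t + h := by linarith
    lift (k : ℤ) * t + h to ℕ using (by exact_mod_cast hpos) with m hm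
    have hmt : (m : ℝ) = k * t + h := by exact_mod_cast hm
    exact ⟨m, ⟨by linarith, by linarith, t, hm⟩, rfl⟩

lemma ncard_progressionIoc (hk : 0 < k) (hx : 0 ≤ x) :
    (progressionIoc k h x y).ncard = (⌊(y - h) / k⌋ - ⌊(x - h) / k⌋).toNat := by
  have hinj : Function.Injective fun t : ℤ => k * t + h := fun s t hst => by
    simpa [hk.ne'] using hst
  rw [← (Nat.cast_injective (R := ℤ)).injOn.ncard_image, natCast_image_progressionIoc h y hk hx,
    hinj.injOn.ncard_image, ← Finset.coe_Ioc, ncard_coe_finset, Int.card_Ioc]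

lemma ncard_progressionIoc_cast (hk : 0 < k) (hx : 0 ≤ x) :
    ((progressionIoc k h x y).ncard : ℝ) = max ((⌊(y - h) / k⌋ - ⌊(x - h) / k⌋ : ℤ) : ℝ) 0 := by
  rw [ncard_progressionIoc h y hk hx]
  exact_mod_cast Int.toNat_eq_max _

lemma ncard_progressionIoc_le (hk : 0 < k) (hx : 0 ≤ x) :
    ((progressionIoc k h x y).ncard : ℝ) ≤ max (y - x) 0 / k + 1 := by
  rw [ncard_progressionIoc_cast h y hk hx]
  push_cast
  have := Int.floor_le ((y - h) / k)
  have := Int.sub_one_lt_floor ((x - h) / k)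
  have : (y - h) / k - (x - h) / k = (y - x) / k := by ring
  have : (y - x) / k ≤ max (y - x) 0 / k := by gcongr; exact le_max_left _ _
  have : 0 ≤ max (y - x) 0 / k := by positivity
  apply max_le <;> linarith

lemma le_ncard_progressionIoc (hk : 0 < k) (hx : 0 ≤ x) :
    (y - x) / k - 1 ≤ (progressionIoc k h x y).ncard := by
  rw [ncard_progressionIoc_cast h y hk hx]
  push_cast
  have := Int.sub_one_lt_floor ((y - h) / k)
  have := Int.floor_le ((x - h) / k)
  have : (y - h) / k - (x - h) / k = (y - x) / k := by ring
  linarith [le_max_left (((⌊(y - h) / k⌋ : ℤ) : ℝ) - ⌊(x - h) / k⌋) 0]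

end progression

lemma exists_lt_le_succ_of_tendsto {u : ℕ → ℝ} (hu : Tendsto u atTop atTop) {q₀ : ℕ} {x : ℝ}
    (hx : u q₀ < x) : ∃ q ≥ q₀, u q < x ∧ x ≤ u (q + 1) := by
  by_contra! H
  have hlt : ∀ q ≥ q₀, u q < x := fun q hq => Nat.le_induction hx (fun n hn ih => H n hn ih) q hq
  obtain ⟨q, hxq, hq⟩ := ((hu.eventually_ge_atTop x).and (eventually_ge_atTop q₀)).exists
  exact (hlt q hq).not_ge hxq

lemma max_min_sub_le {x y N : ℝ} (hx : 0 ≤ x) (hxy : x ≤ y) (hy : 0 < y) (hN : 0 ≤ N) :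
    max (min N y - x) 0 ≤ (1 - x / y) * N := by
  have hxy' : x / y ≤ 1 := (div_le_one hy).2 hxy
  refine max_le ?_ (mul_nonneg (by linarith) hN)
  rcases le_total N y with hNy | hyN
  · have : x * (N / y) ≤ x := mul_le_of_le_one_right hx ((div_le_one hy).2 hNy)
    rw [min_eq_left hNy]
    calc N - x ≤ N - x * (N / y) := by linarith
      _ = (1 - x / y) * N := by ring
  · rw [min_eq_right hyN]
    calc y - x = (1 - x / y) * y := by field_simp
      _ ≤ (1 - x / y) * N := by gcongr

def blockProgression (a b : ℕ → ℝ) (k : ℕ) (h : ℤ) : Set ℕ :=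
  {m : ℕ | 0 < m ∧ (∃ n, a n + 1 ≤ (m : ℝ) ∧ (m : ℝ) ≤ b n) ∧ ∃ x : ℤ, (m : ℤ) = (k : ℤ) * x + h}

section blocks

variable {a b : ℕ → ℝ} {k : ℕ} (h : ℤ) {n₀ : ℕ}

lemma monotoneOn_of_gap (hgap : ∀ n ≥ n₀, a n + 1 ≤ b n ∧ b n < a (n + 1)) :
    MonotoneOn a (Ici n₀) :=
  monotoneOn_nat_Ici_of_le_succ fun n hn => by linarith [hgap n hn]

lemma tendsto_atTop_of_gap (hgap : ∀ n ≥ n₀, a n + 1 ≤ b n ∧ b n < a (n + 1)) :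
    Tendsto a atTop atTop := by
  have hlin : ∀ n ≥ n₀, a n₀ - n₀ + n ≤ a n := by
    refine fun n hn => Nat.le_induction (by simp) (fun n hn ih => ?_) n hn
    push_cast
    linarith [hgap n hn]
  refine tendsto_atTop_mono' atTop (eventually_atTop.2 ⟨n₀, hlin⟩) ?_
  exact tendsto_atTop_add_const_left _ _ tendsto_natCast_atTop_atTop

lemma exists_lt_of_mem_blockProgression (hgap : ∀ n ≥ n₀, a n + 1 ≤ b n ∧ b n < a (n + 1))
    {q m : ℕ} (hq : n₀ ≤ q) (hm : m ∈ blockProgression a b k h) (hmq : (m : ℝ) ≤ a q) :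
    ∃ j < q, a j + 1 ≤ m ∧ (m : ℝ) ≤ b j := by
  obtain ⟨-, ⟨j, hj₁, hj₂⟩, -⟩ := hm
  refine ⟨j, ?_, hj₁, hj₂⟩
  by_contra! hqj
  linarith [monotoneOn_of_gap hgap hq (le_trans hq hqj) hqj]

lemma inter_Icc_subset_Icc (hgap : ∀ n ≥ n₀, a n + 1 ≤ b n ∧ b n < a (n + 1))
    {q N : ℕ} {C : ℝ} (hq : n₀ ≤ q) (hC : ∀ j < q, b j ≤ C) (hN : (N : ℝ) ≤ a q) :
    blockProgression a b k h ∩ Icc 1 N ⊆ Icc 1 ⌊C⌋₊ := by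
  rintro m ⟨hm, hm₁, hmN⟩
  obtain ⟨j, hjq, -, hmj⟩ :=
    exists_lt_of_mem_blockProgression h hgap hq hm (le_trans (by exact_mod_cast hmN) hN)
  exact ⟨hm₁, Nat.le_floor (hmj.trans (hC j hjq))⟩

lemma inter_Icc_subset_union (hgap : ∀ n ≥ n₀, a n + 1 ≤ b n ∧ b n < a (n + 1))
    {q N : ℕ} {C : ℝ} (hq : n₀ ≤ q) (hC : ∀ j < q, b j ≤ C) (hN : (N : ℝ) ≤ a (q + 1)) :
    blockProgression a b k h ∩ Icc 1 N ⊆ Icc 1 ⌊C⌋₊ ∪ progressionIoc k h (a q) (min N (b q)) := by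
  rintro m ⟨hm, hm₁, hmN⟩
  have hmN' : (m : ℝ) ≤ N := by exact_mod_cast hmN
  obtain ⟨j, hjq, hj₁, hj₂⟩ :=
    exists_lt_of_mem_blockProgression h hgap (by omega) hm (hmN'.trans hN)
  rcases (Nat.lt_succ_iff.1 hjq).lt_or_eq with hj | rfl
  · exact Or.inl ⟨hm₁, Nat.le_floor (hj₂.trans (hC j hj))⟩
  · exact Or.inr ⟨by linarith, le_min hmN' hj₂, hm.2.2⟩

lemma ncard_inter_Icc_le (hk : 0 < k) (hgap : ∀ n ≥ n₀, a n + 1 ≤ b n ∧ b n < a (n + 1))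
    {q N : ℕ} {C : ℝ} (hq : n₀ ≤ q) (hC : ∀ j < q, b j ≤ C) (hC₀ : 0 ≤ C) (ha : 0 ≤ a q)
    (hN : (N : ℝ) ≤ a (q + 1)) :
    ((blockProgression a b k h ∩ Icc 1 N).ncard : ℝ) ≤
      C + (max (min (N : ℝ) (b q) - a q) 0 / k + 1) := by
  have hfin : (progressionIoc k h (a q) (min N (b q))).Finite :=
    (finite_Iic ⌊min (N : ℝ) (b q)⌋₊).subset fun m hm => Nat.le_floor hm.2.1
  have hcard := (ncard_le_ncard (inter_Icc_subset_union h hgap hq hC hN)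
    ((finite_Icc _ _).union hfin)).trans (ncard_union_le _ _)
  rw [ncard_Icc_nat, Nat.add_sub_cancel] at hcard
  have hcard' : ((blockProgression a b k h ∩ Icc 1 N).ncard : ℝ) ≤
      ⌊C⌋₊ + (progressionIoc k h (a q) (min N (b q))).ncard := by exact_mod_cast hcard
  linarith [Nat.floor_le hC₀, ncard_progressionIoc_le h (min (N : ℝ) (b q)) hk ha]

lemma progressionIoc_subset_inter_Icc {q : ℕ} (ha : 0 ≤ a q) :
    progressionIoc k h (a q + 1) (b q) ⊆ blockProgression a b k h ∩ Icc 1 ⌊b q⌋₊ := by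
  rintro m ⟨hm₁, hm₂, hm₃⟩
  have hm₀ : 0 < m := by exact_mod_cast (show (0 : ℝ) < m by linarith)
  exact ⟨⟨hm₀, ⟨q, hm₁.le, hm₂⟩, hm₃⟩, hm₀, Nat.le_floor hm₂⟩

lemma le_ncard_inter_Icc_floor (hk : 0 < k) {q : ℕ} (ha : 0 ≤ a q) :
    (b q - (a q + 1)) / k - 1 ≤ (blockProgression a b k h ∩ Icc 1 ⌊b q⌋₊).ncard := by
  refine (le_ncard_progressionIoc h (b q) hk (by linarith)).trans ?_
  exact_mod_cast ncard_le_ncard (progressionIoc_subset_inter_Icc h ha)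
    ((finite_Icc _ _).subset inter_subset_right)

end blocks

section asymptotics

variable {a b : ℕ → ℝ} {ℓ : ℝ} {k : ℕ} (h : ℤ)

lemma eventually_forall_lt_le_mul (hev : ∀ᶠ n in atTop, a n + 1 ≤ b n ∧ b n < a (n + 1))
    (hba : Tendsto (fun n => b n / a (n + 1)) atTop (nhds 0)) {ε : ℝ} (hε : 0 < ε) :
    ∀ᶠ q in atTop, ∀ j < q, b j ≤ ε * a q := by
  obtain ⟨n₀, hgap⟩ := eventually_atTop.1 hev
  have ha := tendsto_atTop_of_gap hgap
  obtain ⟨n₁, hn₁⟩ := eventually_atTop.1 <| (eventually_ge_atTop n₀).and <|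
    (hba.eventually_le_const hε).and ((ha.comp (tendsto_add_atTop_nat 1)).eventually_gt_atTop 0)
  obtain ⟨B, hB⟩ := ((finite_Iio n₁).image b).bddAbove
  filter_upwards [eventually_gt_atTop n₁, (ha.const_mul_atTop hε).eventually_ge_atTop B]
    with q hq hBq j hjq
  rcases lt_or_ge j n₁ with hj | hj
  · exact (hB (mem_image_of_mem b hj)).trans hBq
  · obtain ⟨hn₀j, hbj, hapos⟩ := hn₁ j hj
    calc b j ≤ ε * a (j + 1) := (div_le_iff₀ hapos).1 hbj
      _ ≤ ε * a q := by
        gcongr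
        exact monotoneOn_of_gap hgap (mem_Ici.2 (by omega)) (mem_Ici.2 (by omega)) hjq

lemma eventually_partialDensity_le (hk : 0 < k)
    (hev : ∀ᶠ n in atTop, a n + 1 ≤ b n ∧ b n < a (n + 1))
    (hab : Tendsto (fun n => a n / b n) atTop (nhds ℓ))
    (hba : Tendsto (fun n => b n / a (n + 1)) atTop (nhds 0)) {y : ℝ} (hy : (1 - ℓ) / k < y) :
    ∀ᶠ N in atTop, partialDensity (blockProgression a b k h) N ≤ y := by
  set δ := (y - (1 - ℓ) / k) / 3 with hδ
  have hδ₀ : 0 < δ := by rw [hδ]; linarith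
  obtain ⟨n₀, hgap⟩ := eventually_atTop.1 hev
  have ha := tendsto_atTop_of_gap hgap
  obtain ⟨q₁, hq₁⟩ := eventually_atTop.1 <| (eventually_ge_atTop n₀).and <|
    ((ha.const_mul_atTop hδ₀).eventually_ge_atTop 1).and <|
    (eventually_forall_lt_le_mul hev hba hδ₀).and (hab.eventually_const_le (sub_lt_self ℓ hδ₀))
  filter_upwards [tendsto_natCast_atTop_atTop.eventually_gt_atTop (a q₁)] with N hN
  obtain ⟨q, hq, haN, hNa⟩ := exists_lt_le_succ_of_tendsto ha hN
  obtain ⟨hn₀q, hδa, hC, hℓ⟩ := hq₁ q hq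
  have ha₀ : 0 < a q := pos_of_mul_pos_right (by linarith) hδ₀.le
  have hb₀ : 0 < b q := by linarith [hgap q hn₀q]
  have hN₀ : 0 < (N : ℝ) := ha₀.trans haN
  have hk₁ : (1 : ℝ) ≤ k := by exact_mod_cast hk
  have hwindow := max_min_sub_le ha₀.le (by linarith [hgap q hn₀q]) hb₀ hN₀.le
  rw [partialDensity, div_le_iff₀ hN₀]
  calc ((blockProgression a b k h ∩ Icc 1 N).ncard : ℝ)
      ≤ δ * a q + (max (min (N : ℝ) (b q) - a q) 0 / k + 1) :=
        ncard_inter_Icc_le h hk hgap hn₀q hC (by positivity) ha₀.le hNa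
    _ ≤ δ * N + ((1 - a q / b q) * N / k + δ * N) := by
        gcongr
        linarith [mul_le_mul_of_nonneg_left haN.le hδ₀.le]
    _ ≤ δ * N + ((1 - ℓ + δ) * N / k + δ * N) := by gcongr; linarith
    _ = ((1 - ℓ) / k + 2 * δ) * N + δ * N / k := by ring
    _ ≤ ((1 - ℓ) / k + 3 * δ) * N := by linarith [div_le_self (by positivity : 0 ≤ δ * N) hk₁]
    _ = y * N := by rw [hδ]; ring

lemma frequently_le_partialDensity (hk : 0 < k)
    (hev : ∀ᶠ n in atTop, a n + 1 ≤ b n ∧ b n < a (n + 1))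
    (hab : Tendsto (fun n => a n / b n) atTop (nhds ℓ)) {y : ℝ} (hy : y < (1 - ℓ) / k) :
    ∃ᶠ N in atTop, y ≤ partialDensity (blockProgression a b k h) N := by
  obtain ⟨n₀, hgap⟩ := eventually_atTop.1 hev
  have ha := tendsto_atTop_of_gap hgap
  have hb : Tendsto b atTop atTop :=
    tendsto_atTop_mono' _ (eventually_atTop.2 ⟨n₀, fun n hn => by linarith [hgap n hn]⟩) ha
  have hlim : Tendsto (fun q => ((b q - (a q + 1)) / k - 1) / b q) atTop (nhds ((1 - ℓ) / k)) := by
    have hinv : Tendsto (fun q => (b q)⁻¹) atTop (nhds 0) := hb.inv_tendsto_atTop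
    have := (((tendsto_const_nhds (x := (1 : ℝ))).sub hab).sub hinv).div_const (k : ℝ) |>.sub hinv
    rw [sub_zero, sub_zero] at this
    refine this.congr' ?_
    filter_upwards [hb.eventually_gt_atTop 0] with q hq
    field_simp
    ring
  refine (tendsto_nat_floor_atTop.comp hb).frequently_map _ (fun q hq => hq) ?_
  refine Eventually.frequently ?_
  filter_upwards [hlim.eventually_const_le hy, ha.eventually_ge_atTop 0, eventually_ge_atTop n₀]
    with q hyq ha₀ hq
  have hb₁ : 1 ≤ b q := by linarith [hgap q hq]
  have hfloor : (0 : ℝ) < ⌊b q⌋₊ := by exact_mod_cast Nat.floor_pos.2 hb₁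
  calc y ≤ ((b q - (a q + 1)) / k - 1) / b q := hyq
    _ ≤ (blockProgression a b k h ∩ Icc 1 ⌊b q⌋₊).ncard / b q := by
        gcongr
        exact le_ncard_inter_Icc_floor h hk ha₀
    _ ≤ partialDensity (blockProgression a b k h) ⌊b q⌋₊ := by
        unfold partialDensity
        gcongr
        exact Nat.floor_le (by linarith)

lemma frequently_partialDensity_le (hev : ∀ᶠ n in atTop, a n + 1 ≤ b n ∧ b n < a (n + 1))
    (hba : Tendsto (fun n => b n / a (n + 1)) atTop (nhds 0)) {y : ℝ} (hy : 0 < y) :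
    ∃ᶠ N in atTop, partialDensity (blockProgression a b k h) N ≤ y := by
  obtain ⟨n₀, hgap⟩ := eventually_atTop.1 hev
  have ha := tendsto_atTop_of_gap hgap
  refine (tendsto_nat_floor_atTop.comp ha).frequently_map _ (fun q hq => hq) ?_
  refine Eventually.frequently ?_
  filter_upwards [eventually_ge_atTop n₀, eventually_forall_lt_le_mul hev hba (half_pos hy),
    ha.eventually_ge_atTop 1] with q hq hC ha₁
  have hsub := inter_Icc_subset_Icc (k := k) h hgap hq hC (Nat.floor_le (by linarith))
  have hcount := ncard_le_ncard hsub (finite_Icc _ _)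
  rw [ncard_Icc_nat, Nat.add_sub_cancel] at hcount
  have hfloor : (1 : ℝ) ≤ ⌊a q⌋₊ := by exact_mod_cast Nat.le_floor (by simpa using ha₁)
  have ha₂ : a q ≤ 2 * ⌊a q⌋₊ := by linarith [Nat.lt_floor_add_one (a q)]
  rw [Function.comp_apply, partialDensity, div_le_iff₀ (by linarith)]
  calc ((blockProgression a b k h ∩ Icc 1 ⌊a q⌋₊).ncard : ℝ) ≤ ⌊y / 2 * a q⌋₊ := by
        exact_mod_cast hcount
    _ ≤ y / 2 * a q := Nat.floor_le (by positivity)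
    _ ≤ y * ⌊a q⌋₊ := by nlinarith

end asymptotics

theorem stmt10_general (a b : ℕ → ℝ) (ℓ : ℝ)
    (hev : ∀ᶠ n in Filter.atTop, a n + 1 ≤ b n ∧ b n < a (n + 1))
    (hab : Filter.Tendsto (fun n => a n / b n) Filter.atTop (nhds ℓ))
    (hba : Filter.Tendsto (fun n => b n / a (n + 1)) Filter.atTop (nhds 0))
    (k : ℕ+) (h : ℤ) :
    dUpper {m : ℕ | 0 < m ∧ (∃ n, a n + 1 ≤ (m : ℝ) ∧ (m : ℝ) ≤ b n) ∧
        ∃ x : ℤ, (m : ℤ) = ((k : ℕ) : ℤ) * x + h} = (1 - ℓ) / ((k : ℕ) : ℝ) ∧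
    dLower {m : ℕ | 0 < m ∧ (∃ n, a n + 1 ≤ (m : ℝ) ∧ (m : ℝ) ≤ b n) ∧
        ∃ x : ℤ, (m : ℤ) = ((k : ℕ) : ℤ) * x + h} = 0 :=
  ⟨dUpper_eq_of (fun _ hy => eventually_partialDensity_le h k.pos hev hab hba hy)
      (fun _ hy => frequently_le_partialDensity h k.pos hev hab hy),
    dLower_eq_zero_of fun _ hy => frequently_partialDensity_le h hev hba hy⟩

theorem stmt10 (a b : ℕ → ℝ) (ℓ : ℝ)
    (hpos : ∀ n, 0 < a n ∧ 0 < b n)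
    (hev : ∀ᶠ n in Filter.atTop, a n + 1 ≤ b n ∧ b n < a (n + 1))
    (hab : Filter.Tendsto (fun n => a n / b n) Filter.atTop (nhds ℓ))
    (hba : Filter.Tendsto (fun n => b n / a (n + 1)) Filter.atTop (nhds 0))
    (k : ℕ+) (h : ℤ) :
    dUpper {m : ℕ | 0 < m ∧ (∃ n, a n + 1 ≤ (m : ℝ) ∧ (m : ℝ) ≤ b n) ∧
        ∃ x : ℤ, (m : ℤ) = ((k : ℕ) : ℤ) * x + h} = (1 - ℓ) / ((k : ℕ) : ℝ) ∧
    dLower {m : ℕ | 0 < m ∧ (∃ n, a n + 1 ≤ (m : ℝ) ∧ (m : ℝ) ≤ b n) ∧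
        ∃ x : ℤ, (m : ℤ) = ((k : ℕ) : ℤ) * x + h} = 0 :=
  stmt10_general a b ℓ hev hab hba k h
end

section
/- Let q ∈ [1,∞), let (αₙ)ₙ≥1 be a sequence in [0,1] with Σₙ αₙ = 1, and let (μₙ)ₙ≥1 be a sequence of upper densities on ℕ⁺ (each μₙ satisfies: μₙ(ℕ⁺)=1, monotone, subadditive, μₙ(k·X+h)=(1/k)μₙ(X), and 0 ≤ μₙ ≤ 1). Then μ*(X) := (Σₙ αₙ·(μₙ(X))^q)^{1/q} is again an upper density on ℕ⁺. -/
noncomputable def combo (q : ℝ) (α : ℕ → ℝ) (μ : ℕ → Set ℕ+ → ℝ) (X : Set ℕ+) : ℝ :=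
  (∑' n : ℕ, α n * (μ n X) ^ q) ^ (1 / q)

open Real

section WeightedLp

variable {q : ℝ} {α a b : ℕ → ℝ}

lemma summable_mul_rpow_of_le (hq : 0 ≤ q) (hα0 : ∀ n, 0 ≤ α n) (hα : Summable α)
    (ha0 : ∀ n, 0 ≤ a n) {C : ℝ} (haC : ∀ n, a n ≤ C) : Summable fun n => α n * a n ^ q :=
  (hα.mul_left (C ^ q)).of_nonneg_of_le (fun n => mul_nonneg (hα0 n) (rpow_nonneg (ha0 n) q))
    fun n => by
      rw [mul_comm (C ^ q)]
      exact mul_le_mul_of_nonneg_left (rpow_le_rpow (ha0 n) (haC n) hq) (hα0 n)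

lemma rpow_tsum_mul_rpow_le_of_le (hq : 0 < q) (hα0 : ∀ n, 0 ≤ α n) (ha0 : ∀ n, 0 ≤ a n)
    (hab : ∀ n, a n ≤ b n) (hb : Summable fun n => α n * b n ^ q) :
    (∑' n, α n * a n ^ q) ^ (1 / q) ≤ (∑' n, α n * b n ^ q) ^ (1 / q) := by
  have hle : ∀ n, α n * a n ^ q ≤ α n * b n ^ q := fun n =>
    mul_le_mul_of_nonneg_left (rpow_le_rpow (ha0 n) (hab n) hq.le) (hα0 n)
  have hnonneg : ∀ n, 0 ≤ α n * a n ^ q := fun n => mul_nonneg (hα0 n) (rpow_nonneg (ha0 n) q)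
  exact rpow_le_rpow (tsum_nonneg hnonneg)
    ((hb.of_nonneg_of_le hnonneg hle).tsum_le_tsum hle hb) (by positivity)

lemma rpow_tsum_mul_rpow_add_le (hq : 1 ≤ q) (hα0 : ∀ n, 0 ≤ α n) (ha0 : ∀ n, 0 ≤ a n)
    (hb0 : ∀ n, 0 ≤ b n) (ha : Summable fun n => α n * a n ^ q)
    (hb : Summable fun n => α n * b n ^ q) :
    (∑' n, α n * (a n + b n) ^ q) ^ (1 / q) ≤
      (∑' n, α n * a n ^ q) ^ (1 / q) + (∑' n, α n * b n ^ q) ^ (1 / q) := by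
  -- Absorbing the weights reduces this to the unweighted Minkowski inequality.
  have hweight : ∀ n {c : ℝ}, 0 ≤ c → (α n ^ (1 / q) * c) ^ q = α n * c ^ q := fun n c hc => by
    rw [mul_rpow (rpow_nonneg (hα0 n) _) hc, ← rpow_mul (hα0 n),
      one_div_mul_cancel (by positivity), rpow_one]
  have key := Lp_add_le_tsum_of_nonneg' hq
    (fun n => mul_nonneg (rpow_nonneg (hα0 n) (1 / q)) (ha0 n))
    (fun n => mul_nonneg (rpow_nonneg (hα0 n) (1 / q)) (hb0 n))
    (by simpa only [hweight _ (ha0 _)] using ha) (by simpa only [hweight _ (hb0 _)] using hb)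
  simpa only [← mul_add, hweight _ (ha0 _), hweight _ (hb0 _),
    hweight _ (add_nonneg (ha0 _) (hb0 _))] using key

lemma rpow_tsum_mul_rpow_const_mul (hq : q ≠ 0) (hα0 : ∀ n, 0 ≤ α n) (ha0 : ∀ n, 0 ≤ a n)
    {c : ℝ} (hc : 0 ≤ c) :
    (∑' n, α n * (c * a n) ^ q) ^ (1 / q) = c * (∑' n, α n * a n ^ q) ^ (1 / q) := by
  have hsplit : ∀ n, α n * (c * a n) ^ q = c ^ q * (α n * a n ^ q) := fun n => by
    rw [mul_rpow hc (ha0 n)]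
    ring
  rw [tsum_congr hsplit, tsum_mul_left,
    mul_rpow (rpow_nonneg hc q) (tsum_nonneg fun n => mul_nonneg (hα0 n) (rpow_nonneg (ha0 n) q)),
    ← rpow_mul hc, mul_one_div_cancel hq, rpow_one]

end WeightedLp

theorem stmt15 (q : ℝ) (hq : 1 ≤ q)
    (α : ℕ → ℝ) (hα : ∀ n, α n ∈ Set.Icc (0 : ℝ) 1) (hsum : ∑' n : ℕ, α n = 1)
    (μ : ℕ → Set ℕ+ → ℝ)
    (hd : ∀ n, μ n Set.univ = 1 ∧
      (∀ X Y : Set ℕ+, X ⊆ Y → μ n X ≤ μ n Y) ∧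
      (∀ X Y : Set ℕ+, μ n (X ∪ Y) ≤ μ n X + μ n Y) ∧
      (∀ (X : Set ℕ+) (h k : ℕ+),
        μ n ((fun x => k * x + h) '' X) = ((k : ℕ) : ℝ)⁻¹ * μ n X) ∧
      (∀ X : Set ℕ+, 0 ≤ μ n X ∧ μ n X ≤ 1)) :
    combo q α μ Set.univ = 1 ∧
    (∀ X Y : Set ℕ+, X ⊆ Y → combo q α μ X ≤ combo q α μ Y) ∧
    (∀ X Y : Set ℕ+, combo q α μ (X ∪ Y) ≤ combo q α μ X + combo q α μ Y) ∧
    (∀ (X : Set ℕ+) (h k : ℕ+),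
      combo q α μ ((fun x => k * x + h) '' X) = ((k : ℕ) : ℝ)⁻¹ * combo q α μ X) ∧
    (∀ X : Set ℕ+, 0 ≤ combo q α μ X ∧ combo q α μ X ≤ 1) := by
  have hq0 : 0 < q := one_pos.trans_le hq
  have hα0 : ∀ n, 0 ≤ α n := fun n => (hα n).1
  have hαs : Summable α := by
    by_contra h
    simp [tsum_eq_zero_of_not_summable h] at hsum
  have hμ0 : ∀ X n, 0 ≤ μ n X := fun X n => ((hd n).2.2.2.2 X).1
  have hμ1 : ∀ X n, μ n X ≤ 1 := fun X n => ((hd n).2.2.2.2 X).2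
  have hsumm : ∀ X, Summable fun n => α n * μ n X ^ q := fun X =>
    summable_mul_rpow_of_le hq0.le hα0 hαs (hμ0 X) (hμ1 X)
  refine ⟨?_, fun X Y hXY => ?_, fun X Y => ?_, fun X h k => ?_, fun X => ⟨?_, ?_⟩⟩
  · simp [combo, (hd _).1, hsum]
  · exact rpow_tsum_mul_rpow_le_of_le hq0 hα0 (hμ0 X) (fun n => (hd n).2.1 X Y hXY) (hsumm Y)
  · calc combo q α μ (X ∪ Y) ≤ (∑' n, α n * (μ n X + μ n Y) ^ q) ^ (1 / q) :=
          rpow_tsum_mul_rpow_le_of_le hq0 hα0 (hμ0 _) (fun n => (hd n).2.2.1 X Y)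
            (summable_mul_rpow_of_le hq0.le hα0 hαs (fun n => add_nonneg (hμ0 X n) (hμ0 Y n))
              fun n => add_le_add (hμ1 X n) (hμ1 Y n))
      _ ≤ combo q α μ X + combo q α μ Y :=
          rpow_tsum_mul_rpow_add_le hq hα0 (hμ0 X) (hμ0 Y) (hsumm X) (hsumm Y)
  · simp only [combo, (hd _).2.2.2.1]
    exact rpow_tsum_mul_rpow_const_mul hq0.ne' hα0 (hμ0 X) (by positivity)
  · exact rpow_nonneg (tsum_nonneg fun n => mul_nonneg (hα0 n) (rpow_nonneg (hμ0 X n) q)) _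
  · simpa [combo, hsum] using rpow_tsum_mul_rpow_le_of_le hq0 hα0 (hμ0 X) (hμ1 X)
      (b := fun _ => 1) (by simpa using hαs)
end

section
/- Let μ* be an upper quasi-density on ℕ⁺ and let P ⊆ ℕ⁺ be the set of primes. Then μ*(P) = 0. -/
/-!
A set contained in a single residue class `h + kℕ⁺` has upper quasi-density at most `1/k`, and
a finite set has upper quasi-density `0` (translate a singleton into any residue class).
All but finitely many primes lie in the `φ(k)` residue classes modulo `k` coprime to `k`,
so `μ(P) ≤ φ(k)/k` for every `k`. For `k` the primorial `n#` this bound is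
`∏_{p ≤ n} (1 - 1/p) ≤ exp (-∑_{p ≤ n} 1/p)`, which tends to `0` because `∑ 1/p` diverges.
-/

open Filter Finset Topology

theorem nonpos_of_forall_le_inv_pnat {r : ℝ} (h : ∀ k : ℕ+, r ≤ ((k : ℕ) : ℝ)⁻¹) :
    r ≤ 0 :=
  ge_of_tendsto' tendsto_one_div_add_atTop_nhds_zero_nat fun n => by
    simpa using h (Nat.succPNat n)

theorem PNat.exists_coprime_residue_of_prime {p k : ℕ+} (hp : (p : ℕ).Prime) (hkp : k < p) :
    ∃ h ≤ k, Nat.Coprime h k ∧ ∃ y : ℕ+, p = k * y + h := by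
  have hdiv := PNat.mod_add_div p k
  have hmod := (PNat.mod_le p k).2
  have hdiv_pos : 0 < p.div k := Nat.pos_of_ne_zero fun h0 => by
    rw [h0, mul_zero, add_zero] at hdiv
    exact (PNat.coe_injective hdiv ▸ hmod).not_gt hkp
  have hcop : Nat.Coprime p k :=
    (Nat.Prime.coprime_iff_not_dvd hp).mpr (Nat.not_dvd_of_pos_of_lt k.pos hkp)
  refine ⟨p.mod k, hmod, ?_, (p.div k).toPNat hdiv_pos, PNat.eq ?_⟩
  · rwa [← hdiv, Nat.coprime_add_mul_left_left] at hcop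
  · rw [PNat.add_coe, PNat.mul_coe, ← hdiv, add_comm]
    rfl

theorem Nat.totient_div_self_eq_prod {n : ℕ} (hn : n ≠ 0) :
    (n.totient : ℝ) / n = ∏ p ∈ n.primeFactors, (1 - (p : ℝ)⁻¹) := by
  rw [div_eq_iff (by exact_mod_cast hn), mul_comm]
  simpa using congrArg (Rat.cast : ℚ → ℝ) (Nat.totient_eq_mul_prod_factors n)

theorem Real.prod_one_sub_le_exp_neg_sum {ι : Type*} (s : Finset ι) (f : ι → ℝ)
    (hf : ∀ i ∈ s, f i ≤ 1) : ∏ i ∈ s, (1 - f i) ≤ Real.exp (-∑ i ∈ s, f i) := by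
  rw [← sum_neg_distrib, Real.exp_sum]
  exact prod_le_prod (fun i hi => sub_nonneg.mpr (hf i hi)) fun i _ => Real.one_sub_le_exp_neg _

theorem tendsto_sum_inv_primesLE_atTop :
    Tendsto (fun n => ∑ p ∈ Nat.primesLE n, (p : ℝ)⁻¹) atTop atTop := by
  have hnn (n : ℕ) : 0 ≤ Set.indicator {p | p.Prime} (fun n : ℕ => (1 : ℝ) / n) n :=
    Set.indicator_nonneg (fun _ _ => by positivity) n
  refine (((not_summable_iff_tendsto_nat_atTop_of_nonneg hnn).mp
    not_summable_one_div_on_primes).comp (tendsto_add_atTop_nat 1)).congr fun n => ?_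
  simp [Nat.primesLE_eq_filter_range, sum_filter, Set.indicator_apply]

theorem tendsto_prod_one_sub_inv_primesLE :
    Tendsto (fun n => ∏ p ∈ Nat.primesLE n, (1 - (p : ℝ)⁻¹)) atTop (𝓝 0) :=
  tendsto_of_tendsto_of_tendsto_of_le_of_le tendsto_const_nhds
    (Real.tendsto_exp_neg_atTop_nhds_zero.comp tendsto_sum_inv_primesLE_atTop)
    (fun _ => prod_nonneg fun p _ => sub_nonneg.mpr (Nat.cast_inv_le_one p))
    (fun _ => Real.prod_one_sub_le_exp_neg_sum _ _ fun p _ => Nat.cast_inv_le_one p)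

structure IsUpperQuasiDensity (μ : Set ℕ+ → ℝ) : Prop where
  univ_eq_one : μ Set.univ = 1
  le_one : ∀ X, μ X ≤ 1
  union_le : ∀ X Y, μ (X ∪ Y) ≤ μ X + μ Y
  image_mul_add : ∀ (X : Set ℕ+) (h k : ℕ+),
    μ ((fun x => k * x + h) '' X) = ((k : ℕ) : ℝ)⁻¹ * μ X

namespace IsUpperQuasiDensity

variable {μ : Set ℕ+ → ℝ}

theorem nonneg (hμ : IsUpperQuasiDensity μ) (X : Set ℕ+) : 0 ≤ μ X := by
  have := hμ.union_le X Xᶜ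
  rw [Set.union_compl_self, hμ.univ_eq_one] at this
  linarith [hμ.le_one Xᶜ]

theorem le_inv_of_subset_range (hμ : IsUpperQuasiDensity μ) {X : Set ℕ+} {h k : ℕ+}
    (hX : X ⊆ Set.range fun y => k * y + h) : μ X ≤ ((k : ℕ) : ℝ)⁻¹ := by
  obtain ⟨Y, rfl⟩ := Set.subset_range_iff_exists_image_eq.mp hX
  rw [hμ.image_mul_add]
  exact mul_le_of_le_one_right (by positivity) (hμ.le_one Y)

theorem image_add (hμ : IsUpperQuasiDensity μ) (X : Set ℕ+) (h : ℕ+) :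
    μ ((· + h) '' X) = μ X := by
  simpa using hμ.image_mul_add X h 1

theorem empty_nonpos (hμ : IsUpperQuasiDensity μ) : μ ∅ ≤ 0 :=
  nonpos_of_forall_le_inv_pnat fun k =>
    hμ.le_inv_of_subset_range (Set.empty_subset (Set.range fun y => k * y + 1))

theorem singleton_nonpos (hμ : IsUpperQuasiDensity μ) (n : ℕ+) : μ {n} ≤ 0 := by
  refine nonpos_of_forall_le_inv_pnat fun k => ?_
  rw [← hμ.image_add {n} k, Set.image_singleton]
  exact hμ.le_inv_of_subset_range (h := n) (by simp [add_comm])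

theorem biUnion_le_sum (hμ : IsUpperQuasiDensity μ) {ι : Type*} (s : Finset ι)
    (A : ι → Set ℕ+) : μ (⋃ i ∈ s, A i) ≤ ∑ i ∈ s, μ (A i) := by
  classical
  induction s using Finset.induction_on with
  | empty => simpa using hμ.empty_nonpos
  | insert a s ha ih =>
    rw [Finset.set_biUnion_insert, Finset.sum_insert ha]
    exact (hμ.union_le _ _).trans (by gcongr)

theorem eq_zero_of_finite (hμ : IsUpperQuasiDensity μ) {X : Set ℕ+} (hX : X.Finite) :
    μ X = 0 := by
  refine le_antisymm ?_ (hμ.nonneg X)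
  have hX_eq : X = ⋃ x ∈ hX.toFinset, {x} := by simp
  rw [hX_eq]
  exact (hμ.biUnion_le_sum _ _).trans (Finset.sum_nonpos fun x _ => hμ.singleton_nonpos x)

theorem primes_le_totient_div (hμ : IsUpperQuasiDensity μ) (k : ℕ+) :
    μ {p : ℕ+ | (p : ℕ).Prime} ≤ (k : ℕ).totient / (k : ℕ) := by
  set P := {p : ℕ+ | (p : ℕ).Prime}
  set H : Finset ℕ+ := {h ∈ Icc 1 k | Nat.Coprime h k}
  have hcover : P ⊆ Set.Iic k ∪ ⋃ h ∈ H, Set.range fun y => k * y + h := by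
    intro p hp
    rcases le_or_gt p k with hpk | hkp
    · exact Or.inl hpk
    · obtain ⟨h, hhk, hcop, y, rfl⟩ := PNat.exists_coprime_residue_of_prime hp hkp
      refine Or.inr (Set.mem_biUnion (x := h) ?_ ⟨y, rfl⟩)
      exact mem_filter.mpr ⟨mem_Icc.mpr ⟨one_le, hhk⟩, hcop⟩
  have hcard : #H ≤ (k : ℕ).totient := by
    rw [← Nat.filter_coprime_Ico_eq_totient k 1]
    refine card_le_card_of_injOn (fun h => (h : ℕ)) (fun h hh => ?_) PNat.coe_injective.injOn
    obtain ⟨hh_mem, hh_cop⟩ := mem_filter.mp hh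
    refine mem_filter.mpr ⟨mem_Ico.mpr ⟨h.pos, ?_⟩, Nat.coprime_comm.mp hh_cop⟩
    exact Nat.lt_one_add_iff.mpr (PNat.coe_le_coe _ _ |>.mpr (mem_Icc.mp hh_mem).2)
  rw [← Set.inter_eq_left.mpr hcover, Set.inter_union_distrib_left, Set.inter_iUnion₂]
  calc _ ≤ μ (P ∩ Set.Iic k) + μ (⋃ h ∈ H, P ∩ Set.range fun y => k * y + h) :=
        hμ.union_le _ _
    _ ≤ 0 + ∑ _h ∈ H, ((k : ℕ) : ℝ)⁻¹ := by
      gcongr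
      · exact (hμ.eq_zero_of_finite ((Set.finite_Iic k).inter_of_right P)).le
      · exact (hμ.biUnion_le_sum H _).trans
          (sum_le_sum fun h _ => hμ.le_inv_of_subset_range Set.inter_subset_right)
    _ ≤ (k : ℕ).totient / (k : ℕ) := by
      rw [zero_add, sum_const, nsmul_eq_mul, ← div_eq_mul_inv]
      gcongr

end IsUpperQuasiDensity

theorem stmt17 (μ : Set ℕ+ → ℝ)
    (huniv : μ Set.univ = 1) (hle : ∀ X : Set ℕ+, μ X ≤ 1)
    (hsub : ∀ X Y : Set ℕ+, μ (X ∪ Y) ≤ μ X + μ Y)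
    (hhom : ∀ (X : Set ℕ+) (h k : ℕ+),
      μ ((fun x => k * x + h) '' X) = ((k : ℕ) : ℝ)⁻¹ * μ X) :
    μ {p : ℕ+ | Nat.Prime (p : ℕ)} = 0 := by
  have hμ : IsUpperQuasiDensity μ := ⟨huniv, hle, hsub, hhom⟩
  refine le_antisymm ?_ (hμ.nonneg _)
  refine ge_of_tendsto' tendsto_prod_one_sub_inv_primesLE fun n => ?_
  have := hμ.primes_le_totient_div ⟨primorial n, primorial_pos n⟩
  rwa [PNat.mk_coe, Nat.totient_div_self_eq_prod (primorial_ne_zero n),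
    primeFactors_primorial] at this
end

section
/- Let μ* be an upper density on ℕ⁺ and μ∗ its lower dual. If X, Y ⊆ ℕ⁺ have finite symmetric difference, then μ*(X) = μ*(Y) and μ∗(X) = μ∗(Y). -/
/-! Homogeneity gives `μ {n} = μ {n + k} ≤ μ (k • ℕ⁺ + n) = μ ℕ⁺ / k` for every `k`, so singletons,
and by subadditivity all finite sets, are null. Subadditivity then makes `μ` blind to finite
modifications, and the lower dual inherits this because complementation preserves symmetric
differences. -/

namespace UpperDensity

variable {μ : Set ℕ+ → ℝ}

theorem map_empty
    (hhom : ∀ (X : Set ℕ+) (h k : ℕ+), μ ((fun x => k * x + h) '' X) = ((k : ℕ) : ℝ)⁻¹ * μ X) :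
    μ ∅ = 0 := by
  have h := hhom ∅ 1 2
  rw [Set.image_empty] at h
  norm_num at h
  linarith

theorem nonneg (hmono : Monotone μ)
    (hhom : ∀ (X : Set ℕ+) (h k : ℕ+), μ ((fun x => k * x + h) '' X) = ((k : ℕ) : ℝ)⁻¹ * μ X)
    (X : Set ℕ+) : 0 ≤ μ X :=
  map_empty hhom ▸ hmono X.empty_subset

theorem map_singleton_add
    (hhom : ∀ (X : Set ℕ+) (h k : ℕ+), μ ((fun x => k * x + h) '' X) = ((k : ℕ) : ℝ)⁻¹ * μ X)
    (n h : ℕ+) : μ {n + h} = μ {n} := by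
  simpa using hhom {n} h 1

theorem map_singleton_le_inv (hmono : Monotone μ)
    (hhom : ∀ (X : Set ℕ+) (h k : ℕ+), μ ((fun x => k * x + h) '' X) = ((k : ℕ) : ℝ)⁻¹ * μ X)
    (n k : ℕ+) : μ {n} ≤ ((k : ℕ) : ℝ)⁻¹ * μ Set.univ := by
  have hmem : ({n + k} : Set ℕ+) ⊆ (fun x => k * x + n) '' Set.univ :=
    Set.singleton_subset_iff.2 ⟨1, trivial, by simp [add_comm]⟩
  calc μ {n} = μ {n + k} := (map_singleton_add hhom n k).symm
    _ ≤ _ := hmono hmem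
    _ = _ := hhom _ _ _

theorem map_singleton (hmono : Monotone μ)
    (hhom : ∀ (X : Set ℕ+) (h k : ℕ+), μ ((fun x => k * x + h) '' X) = ((k : ℕ) : ℝ)⁻¹ * μ X)
    (n : ℕ+) : μ {n} = 0 := by
  refine le_antisymm (le_of_forall_pos_le_add fun ε hε => ?_) (nonneg hmono hhom _)
  obtain ⟨m, hm⟩ := exists_nat_gt (μ Set.univ / ε)
  have hm₀ : (0 : ℝ) < m + 1 := by positivity
  calc μ {n} ≤ ((m + 1 : ℕ) : ℝ)⁻¹ * μ Set.univ := map_singleton_le_inv hmono hhom n m.succPNat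
    _ ≤ 0 + ε := by
      push_cast
      rw [zero_add, inv_mul_le_iff₀ hm₀, ← div_le_iff₀ hε]
      linarith

theorem map_finite (hmono : Monotone μ) (hsub : ∀ X Y : Set ℕ+, μ (X ∪ Y) ≤ μ X + μ Y)
    (hhom : ∀ (X : Set ℕ+) (h k : ℕ+), μ ((fun x => k * x + h) '' X) = ((k : ℕ) : ℝ)⁻¹ * μ X)
    {F : Set ℕ+} (hF : F.Finite) : μ F = 0 := by
  refine hF.induction_on _ (map_empty hhom) fun {a s} _ _ ih => ?_
  refine le_antisymm ?_ (nonneg hmono hhom _)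
  calc μ (insert a s) ≤ μ {a} + μ s := Set.singleton_union (a := a) ▸ hsub {a} s
    _ = 0 := by rw [map_singleton hmono hhom, ih, add_zero]

theorem le_of_diff_finite (hmono : Monotone μ) (hsub : ∀ X Y : Set ℕ+, μ (X ∪ Y) ≤ μ X + μ Y)
    (hhom : ∀ (X : Set ℕ+) (h k : ℕ+), μ ((fun x => k * x + h) '' X) = ((k : ℕ) : ℝ)⁻¹ * μ X)
    {A B : Set ℕ+} (hAB : (A \ B).Finite) : μ A ≤ μ B :=
  calc μ A ≤ μ (B ∪ A \ B) := hmono (Set.sdiff_subset_iff.1 subset_rfl)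
    _ ≤ μ B + μ (A \ B) := hsub _ _
    _ = μ B := by rw [map_finite hmono hsub hhom hAB, add_zero]

theorem eq_of_symmDiff_finite (hmono : Monotone μ)
    (hsub : ∀ X Y : Set ℕ+, μ (X ∪ Y) ≤ μ X + μ Y)
    (hhom : ∀ (X : Set ℕ+) (h k : ℕ+), μ ((fun x => k * x + h) '' X) = ((k : ℕ) : ℝ)⁻¹ * μ X)
    {A B : Set ℕ+} (hAB : (symmDiff A B).Finite) : μ A = μ B :=
  le_antisymm (le_of_diff_finite hmono hsub hhom (hAB.subset le_sup_left))
    (le_of_diff_finite hmono hsub hhom (hAB.subset le_sup_right))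

end UpperDensity

theorem stmt18_general (μ : Set ℕ+ → ℝ)
    (hmono : ∀ X Y : Set ℕ+, X ⊆ Y → μ X ≤ μ Y)
    (hsub : ∀ X Y : Set ℕ+, μ (X ∪ Y) ≤ μ X + μ Y)
    (hhom : ∀ (X : Set ℕ+) (h k : ℕ+),
      μ ((fun x => k * x + h) '' X) = ((k : ℕ) : ℝ)⁻¹ * μ X)
    (X Y : Set ℕ+) (hfin : ((X \ Y) ∪ (Y \ X)).Finite) :
    μ X = μ Y ∧ 1 - μ Xᶜ = 1 - μ Yᶜ := by
  have hmono' : Monotone μ := fun X Y => hmono X Y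
  have hfin' : (symmDiff Xᶜ Yᶜ).Finite := by rwa [compl_symmDiff_compl]
  exact ⟨UpperDensity.eq_of_symmDiff_finite hmono' hsub hhom hfin,
    by rw [UpperDensity.eq_of_symmDiff_finite hmono' hsub hhom hfin']⟩

theorem stmt18 (μ : Set ℕ+ → ℝ)
    (huniv : μ Set.univ = 1)
    (hmono : ∀ X Y : Set ℕ+, X ⊆ Y → μ X ≤ μ Y)
    (hsub : ∀ X Y : Set ℕ+, μ (X ∪ Y) ≤ μ X + μ Y)
    (hhom : ∀ (X : Set ℕ+) (h k : ℕ+),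
      μ ((fun x => k * x + h) '' X) = ((k : ℕ) : ℝ)⁻¹ * μ X)
    (X Y : Set ℕ+) (hfin : ((X \ Y) ∪ (Y \ X)).Finite) :
    μ X = μ Y ∧ 1 - μ Xᶜ = 1 - μ Yᶜ :=
  stmt18_general μ hmono hsub hhom X Y hfin
end
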